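/- arXiv:1712.02315 — 7 statements merged into one kernel-verified Lean document; each statement's English description precedes it below -/
import Mathlib

section
/- Let n ≥ 1 and let T ⊆ ℝⁿ be an infinite countable set whose intersection with every bounded set is finite. Then T satisfies the angular condition if and only if for every continuous function f : Sⁿ⁻¹ → ℝ one has lim_{r→∞} (1/N(r)) · Σ_{x ∈ T, 0 < |x| < r} f(x/|x|) = (1/m(Bₙ)) · ∫_{Bₙ} f(x/|x|) dm(x). -/
open MeasureTheory Metric Filter Topology

/-- The number of points of a set, as a real number (finite sets in view). -/
noncomputable def cnt {α : Type*} (S : Set α) : ℝ := Nat.card S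

/-- `N(r)`: the number of points of `T` of norm `< r`. -/
noncomputable def NN {n : ℕ} (T : Set (EuclideanSpace ℝ (Fin n))) (r : ℝ) : ℝ :=
  cnt (T ∩ ball 0 r)

/-- The wedge `W(X, r)` over a subset `X` of the unit sphere. -/
def Wedge {n : ℕ} (X : Set (EuclideanSpace ℝ (Fin n))) (r : ℝ) :
    Set (EuclideanSpace ℝ (Fin n)) :=
  {x | 0 < ‖x‖ ∧ ‖x‖ < r ∧ ‖x‖⁻¹ • x ∈ X}

/-- The angular equidistribution condition. -/
def AngularCond {n : ℕ} (T : Set (EuclideanSpace ℝ (Fin n))) : Prop :=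
  ∀ X ⊆ sphere (0 : EuclideanSpace ℝ (Fin n)) 1, MeasurableSet X →
    volume (frontier (Wedge X 1)) = 0 →
    Tendsto (fun r => cnt (T ∩ Wedge X r) / NN T r) atTop
      (𝓝 ((volume (Wedge X 1)).toReal /
        (volume (ball (0 : EuclideanSpace ℝ (Fin n)) 1)).toReal))

open Classical in
/-- Extension of a continuous function on the sphere to all of `ℝⁿ` by `f(x) = f(x/‖x‖)`
(and `0` at the origin). -/
noncomputable def sphProjExt {n : ℕ}
    (f : C(sphere (0 : EuclideanSpace ℝ (Fin n)) 1, ℝ))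
    (x : EuclideanSpace ℝ (Fin n)) : ℝ :=
  if hx : x ≠ 0 then
    f ⟨‖x‖⁻¹ • x, by
      simp [mem_sphere_zero_iff_norm, norm_smul, inv_mul_cancel₀ (norm_ne_zero_iff.mpr hx)]⟩
  else 0

/-!
Both sides are statements about the empirical distributions `μ_r` of the directions `x / ‖x‖`
of the points `x ∈ T` with `0 < ‖x‖ < r`, compared with the normalized surface measure `σ`, i.e.
the law of the direction of a uniform point of the unit ball. The angular condition says that
`μ_r(s) → σ(s)` for every `σ`-continuity set `s` of the sphere, and the test condition says
that `∫ f dμ_r → ∫ f dσ` for every continuous `f`; by the portmanteau theorem both mean that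
`μ_r` converges weakly to `σ`. The continuity sets match because in polar coordinates
`(u, t) ↦ t • u` the frontier of the wedge over `s` is the wedge over the frontier of `s`, up to
the null set `{0} ∪ Sⁿ⁻¹`. Normalizing by `N(r)` instead of the number of nonzero points is
harmless, since the two differ by at most one and `N(r) → ∞`.
-/

open Set Asymptotics

namespace MeasureTheory

theorem ProbabilityMeasure.tendsto_iff_forall_tendsto_measureReal {Ω ι : Type*}
    [MeasurableSpace Ω] [TopologicalSpace Ω] [TopologicalSpace.PseudoMetrizableSpace Ω]
    [OpensMeasurableSpace Ω] {L : Filter ι} [L.IsCountablyGenerated]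
    {μ : ProbabilityMeasure Ω} {μs : ι → ProbabilityMeasure Ω} :
    Tendsto μs L (𝓝 μ) ↔ ∀ s, MeasurableSet s → (μ : Measure Ω) (frontier s) = 0 →
      Tendsto (fun i ↦ (μs i : Measure Ω).real s) L (𝓝 ((μ : Measure Ω).real s)) := by
  have real_iff (s : Set Ω) :
      Tendsto (fun i ↦ (μs i : Measure Ω).real s) L (𝓝 ((μ : Measure Ω).real s)) ↔
        Tendsto (fun i ↦ (μs i : Measure Ω) s) L (𝓝 ((μ : Measure Ω) s)) :=
    ENNReal.tendsto_toReal_iff (fun _ ↦ measure_ne_top _ _) (measure_ne_top _ _)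
  simp only [real_iff]
  refine ⟨fun h s _ hs ↦ tendsto_measure_of_null_frontier_of_tendsto' h hs,
    fun h ↦ tendsto_of_forall_isOpen_le_liminf' fun G hG ↦ ?_⟩
  exact le_liminf_measure_open_of_forall_tendsto_measure (fun hs h0 ↦ h _ hs h0) G hG

theorem ProbabilityMeasure.tendsto_iff_forall_continuousMap_integral_tendsto {Ω ι : Type*}
    [MeasurableSpace Ω] [TopologicalSpace Ω] [OpensMeasurableSpace Ω] [CompactSpace Ω]
    {L : Filter ι} {μ : ProbabilityMeasure Ω} {μs : ι → ProbabilityMeasure Ω} :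
    Tendsto μs L (𝓝 μ) ↔ ∀ f : C(Ω, ℝ),
      Tendsto (fun i ↦ ∫ ω, f ω ∂(μs i : Measure Ω)) L (𝓝 (∫ ω, f ω ∂(μ : Measure Ω))) := by
  rw [tendsto_iff_forall_integral_tendsto]
  exact (ContinuousMap.equivBoundedOfCompact Ω ℝ).forall_congr_right.symm

theorem FiniteMeasure.measureReal_normalize_mk {Ω : Type*} [Nonempty Ω] [MeasurableSpace Ω]
    {μ : Measure Ω} [IsFiniteMeasure μ] (hμ : μ ≠ 0) (s : Set Ω) :
    (FiniteMeasure.normalize ⟨μ, inferInstance⟩ : Measure Ω).real s = μ.real s / μ.real univ := by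
  rw [FiniteMeasure.toMeasure_normalize_eq_of_nonzero ⟨μ, inferInstance⟩
      fun h ↦ hμ (congrArg toMeasure h),
    measureReal_nnreal_smul_apply, div_eq_inv_mul]
  rfl

theorem FiniteMeasure.integral_normalize_mk {Ω : Type*} [Nonempty Ω] [MeasurableSpace Ω]
    {μ : Measure Ω} [IsFiniteMeasure μ] (hμ : μ ≠ 0) (f : Ω → ℝ) :
    ∫ ω, f ω ∂(FiniteMeasure.normalize ⟨μ, inferInstance⟩ : Measure Ω) =
      (μ.real univ)⁻¹ * ∫ ω, f ω ∂μ := by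
  rw [← FiniteMeasure.average_eq_integral_normalize ⟨μ, inferInstance⟩
      fun h ↦ hμ (congrArg toMeasure h),
    average_eq, smul_eq_mul]
  rfl

theorem Measure.count_real_eq_cnt {α : Type*} [MeasurableSpace α] [MeasurableSingletonClass α]
    {A : Set α} (hA : A.Finite) : Measure.count.real A = cnt A := by
  rw [measureReal_def, Measure.count_apply_finite _ hA, cnt, Nat.card_eq_card_finite_toFinset hA]
  simp

theorem Measure.count_restrict_ne_zero {α : Type*} [MeasurableSpace α] {A : Set α}
    (hA : A.Nonempty) : Measure.count.restrict A ≠ 0 := by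
  rw [Ne, Measure.restrict_eq_zero, Measure.count_eq_zero_iff]
  exact hA.ne_empty

end MeasureTheory

theorem Asymptotics.isEquivalent_of_abs_sub_le {α : Type*} {l : Filter α} {u v : α → ℝ} {C : ℝ}
    (h : ∀ᶠ x in l, |u x - v x| ≤ C) (hv : Tendsto v l atTop) : u ~[l] v := by
  have hO : (u - v) =O[l] (fun _ ↦ (1 : ℝ)) := IsBigO.of_bound C (by simpa using h)
  exact hO.trans_isLittleO ((isLittleO_one_left_iff ℝ).2 (tendsto_norm_atTop_atTop.comp hv))

section

variable {n : ℕ}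

local notation "E" => EuclideanSpace ℝ (Fin n)
local notation "Sph" => sphere (0 : EuclideanSpace ℝ (Fin n)) 1

lemma puncturedBall_eq (r : ℝ) : {x : E | 0 < ‖x‖ ∧ ‖x‖ < r} = ball 0 r \ {0} := by
  ext x
  simp [norm_pos_iff, and_comm]

lemma wedge_subset_ball (X : Set E) (r : ℝ) : Wedge X r ⊆ ball 0 r :=
  fun _ hx ↦ mem_ball_zero_iff.2 hx.2.1

lemma wedge_sphere (r : ℝ) : Wedge (sphere (0 : E) 1) r = {x : E | 0 < ‖x‖ ∧ ‖x‖ < r} := by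
  ext x
  refine ⟨fun h ↦ ⟨h.1, h.2.1⟩, fun h ↦ ⟨h.1, h.2, ?_⟩⟩
  simp [norm_smul, h.1.ne']

lemma volume_real_ball_pos : 0 < volume.real (ball (0 : E) 1) :=
  ENNReal.toReal_pos (measure_ball_pos _ _ one_pos).ne' measure_ball_lt_top.ne

def polarMap (p : Sph × Ioo (0 : ℝ) 1) : E := (p.2 : ℝ) • (p.1 : E)

lemma continuous_polarMap : Continuous (polarMap (n := n)) := by
  unfold polarMap
  fun_prop

lemma isOpenMap_polarMap : IsOpenMap (polarMap (n := n)) := by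
  have hΦ : polarMap (n := n) = Subtype.val ∘ (homeomorphUnitSphereProd E).symm ∘
      Prod.map id (inclusion Ioo_subset_Ioi_self) := by
    ext1 p
    simp [polarMap]
  rw [hΦ]
  exact isOpen_compl_singleton.isOpenMap_subtype_val.comp
    ((homeomorphUnitSphereProd E).symm.isOpenMap.comp
      (IsOpenMap.id.prodMap (isOpen_Ioo.isOpenMap_inclusion Ioo_subset_Ioi_self)))

lemma norm_polarMap (p : Sph × Ioo (0 : ℝ) 1) : ‖polarMap p‖ = p.2 := by
  rw [polarMap, norm_smul, mem_sphere_zero_iff_norm.1 p.1.2, mul_one,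
    Real.norm_of_nonneg p.2.2.1.le]

lemma polarMap_mem_wedge {X : Set E} (p : Sph × Ioo (0 : ℝ) 1) :
    polarMap p ∈ Wedge X 1 ↔ (p.1 : E) ∈ X := by
  change 0 < ‖polarMap p‖ ∧ ‖polarMap p‖ < 1 ∧ ‖polarMap p‖⁻¹ • polarMap p ∈ X ↔ _
  rw [norm_polarMap, polarMap, smul_smul, inv_mul_cancel₀ p.2.2.1.ne', one_smul]
  exact ⟨fun h ↦ h.2.2, fun h ↦ ⟨p.2.2.1, p.2.2.2, h⟩⟩

lemma polarMap_preimage_wedge (s : Set Sph) :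
    polarMap ⁻¹' Wedge (Subtype.val '' s) 1 = s ×ˢ univ := by
  ext p
  simp [polarMap_mem_wedge]

lemma polarMap_image_prod_univ (s : Set Sph) :
    polarMap '' (s ×ˢ univ) = Wedge (Subtype.val '' s) 1 := by
  refine Subset.antisymm (by simp [image_subset_iff, polarMap_preimage_wedge]) ?_
  rintro x ⟨hx0, hx1, u, hu, hux⟩
  refine ⟨(u, ⟨‖x‖, hx0, hx1⟩), ⟨hu, trivial⟩, ?_⟩
  simp [polarMap, hux, smul_smul, mul_inv_cancel₀ hx0.ne']

lemma range_polarMap : range (polarMap (n := n)) = {x : E | 0 < ‖x‖ ∧ ‖x‖ < 1} := by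
  rw [← image_univ, ← univ_prod_univ, polarMap_image_prod_univ, image_univ, Subtype.range_coe,
    wedge_sphere]

/-- Polar coordinates are an open embedding onto the punctured ball, so they carry the frontier
of `s ×ˢ univ` to the part of the frontier of the wedge inside the punctured ball. -/
lemma frontier_wedge_inter_eq (s : Set Sph) :
    frontier (Wedge (Subtype.val '' s) 1) ∩ {x : E | 0 < ‖x‖ ∧ ‖x‖ < 1} =
      Wedge (Subtype.val '' frontier s) 1 := by
  rw [← range_polarMap, ← image_preimage_eq_inter_range,
    isOpenMap_polarMap.preimage_frontier_eq_frontier_preimage continuous_polarMap,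
    polarMap_preimage_wedge, frontier_prod_univ_eq, polarMap_image_prod_univ]

lemma eventually_inter_puncturedBall_nonempty {T : Set E} (hTi : T.Infinite) :
    ∀ᶠ r in atTop, (T ∩ {x : E | 0 < ‖x‖ ∧ ‖x‖ < r}).Nonempty := by
  obtain ⟨x, hxT, hx0⟩ := hTi.nontrivial.exists_ne 0
  filter_upwards [eventually_gt_atTop ‖x‖] with r hr
  exact ⟨x, hxT, norm_pos_iff.2 hx0, hr⟩

lemma angularCond_iff_forall_sphere {T : Set E} :
    AngularCond T ↔ ∀ s : Set Sph, MeasurableSet s →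
      volume (frontier (Wedge (Subtype.val '' s) 1)) = 0 →
      Tendsto (fun r ↦ cnt (T ∩ Wedge (Subtype.val '' s) r) / NN T r) atTop
        (𝓝 (volume.real (Wedge (Subtype.val '' s) 1) / volume.real (ball (0 : E) 1))) := by
  refine ⟨fun h s hs ↦ h _ (Subtype.coe_image_subset _ s)
    (isClosed_sphere.measurableSet.subtype_image hs), fun h X hX hXm ↦ ?_⟩
  have hX' : Subtype.val '' (Subtype.val ⁻¹' X : Set Sph) = X := by
    rwa [Subtype.image_preimage_coe, inter_eq_right]
  simpa only [hX', measureReal_def] using h _ (measurable_subtype_coe hXm)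

section Counting

variable {T : Set (EuclideanSpace ℝ (Fin n))}
  (hfin : ∀ S : Set (EuclideanSpace ℝ (Fin n)), Bornology.IsBounded S → (T ∩ S).Finite)
include hfin

lemma finite_inter_puncturedBall (r : ℝ) : (T ∩ {x : E | 0 < ‖x‖ ∧ ‖x‖ < r}).Finite :=
  hfin _ (isBounded_ball.subset (puncturedBall_eq r ▸ sdiff_subset))

lemma tendsto_NN_atTop (hTi : T.Infinite) : Tendsto (NN T) atTop atTop := by
  refine tendsto_atTop_atTop.2 fun b ↦ ?_
  obtain ⟨k, hk⟩ := exists_nat_ge b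
  obtain ⟨t, htT, rfl⟩ := hTi.exists_subset_card_eq k
  obtain ⟨R, hR⟩ := t.finite_toSet.isBounded.subset_ball 0
  refine ⟨R, fun r hr ↦ hk.trans ?_⟩
  have hsub : (t : Set E) ⊆ T ∩ ball 0 r := fun x hx ↦ ⟨htT hx, ball_subset_ball hr (hR hx)⟩
  rw [NN, cnt, Nat.card_coe_set_eq, ← ncard_coe_finset]
  exact_mod_cast ncard_le_ncard hsub (hfin _ isBounded_ball)

lemma abs_cnt_puncturedBall_sub_NN_le (r : ℝ) :
    |cnt (T ∩ {x : E | 0 < ‖x‖ ∧ ‖x‖ < r}) - NN T r| ≤ 1 := by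
  have hsub : T ∩ {x : E | 0 < ‖x‖ ∧ ‖x‖ < r} ⊆ T ∩ ball 0 r :=
    inter_subset_inter_right _ (puncturedBall_eq r ▸ sdiff_subset)
  have hsup : T ∩ ball 0 r ⊆ insert 0 (T ∩ {x : E | 0 < ‖x‖ ∧ ‖x‖ < r}) := by
    rintro x ⟨hxT, hxr⟩
    rcases eq_or_ne x 0 with rfl | hx0
    · exact mem_insert _ _
    · exact mem_insert_of_mem _ ⟨hxT, norm_pos_iff.2 hx0, mem_ball_zero_iff.1 hxr⟩
  have h1 := ncard_le_ncard hsub (hfin _ isBounded_ball)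
  have h2 := (ncard_le_ncard hsup ((finite_inter_puncturedBall hfin r).insert 0)).trans
    (ncard_insert_le _ _)
  simp only [NN, cnt, Nat.card_coe_set_eq]
  rw [abs_le]
  constructor <;> push_cast [← Nat.cast_le (α := ℝ)] at h1 h2 <;> linarith

lemma isEquivalent_cnt_puncturedBall (hTi : T.Infinite) :
    (fun r ↦ cnt (T ∩ {x : E | 0 < ‖x‖ ∧ ‖x‖ < r})) ~[atTop] NN T :=
  isEquivalent_of_abs_sub_le (.of_forall (abs_cnt_puncturedBall_sub_NN_le hfin))
    (tendsto_NN_atTop hfin hTi)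

lemma tendsto_div_cnt_puncturedBall_iff (hTi : T.Infinite) {g : ℝ → ℝ} {c : ℝ} :
    Tendsto (fun r ↦ g r / cnt (T ∩ {x : E | 0 < ‖x‖ ∧ ‖x‖ < r})) atTop (𝓝 c) ↔
      Tendsto (fun r ↦ g r / NN T r) atTop (𝓝 c) :=
  (IsEquivalent.refl.div (isEquivalent_cnt_puncturedBall hfin hTi)).tendsto_nhds_iff

lemma isFiniteMeasure_count_restrict (r : ℝ) :
    IsFiniteMeasure (Measure.count.restrict (T ∩ {x : E | 0 < ‖x‖ ∧ ‖x‖ < r})) :=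
  isFiniteMeasure_restrict.2 (Measure.count_apply_lt_top.2 (finite_inter_puncturedBall hfin r)).ne

end Counting

variable [Nontrivial (EuclideanSpace ℝ (Fin n))]

instance : Nonempty Sph := (NormedSpace.sphere_nonempty.2 zero_le_one).coe_sort

lemma volume_frontier_wedge (s : Set Sph) :
    volume (frontier (Wedge (Subtype.val '' s) 1)) =
      volume (Wedge (Subtype.val '' frontier s) 1) := by
  set U : Set E := {x : E | 0 < ‖x‖ ∧ ‖x‖ < 1}
  set F := frontier (Wedge (Subtype.val '' s) 1)
  refine le_antisymm ?_ (measure_mono (frontier_wedge_inter_eq s ▸ inter_subset_left))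
  have hFU : F \ U ⊆ sphere 0 1 ∪ {0} := by
    rintro x ⟨hx, hxU⟩
    have hx1 : ‖x‖ ≤ 1 := mem_closedBall_zero_iff.1 (frontier_subset_closure.trans
      (closure_ball (0 : E) one_ne_zero ▸ closure_mono (wedge_subset_ball _ 1)) hx)
    rcases (norm_nonneg x).eq_or_lt with h0 | h0
    · exact Or.inr (norm_eq_zero.1 h0.symm)
    · exact Or.inl (mem_sphere_zero_iff_norm.2 (hx1.eq_of_not_lt fun h1 ↦ hxU ⟨h0, h1⟩))
  have hnull : volume (sphere (0 : E) 1 ∪ {0}) = 0 :=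
    measure_union_null (Measure.addHaar_sphere _ _ _) (measure_singleton 0)
  calc volume F ≤ volume (F ∩ U) + volume (F \ U) := measure_le_inter_add_sdiff _ _ _
    _ = volume (Wedge (Subtype.val '' frontier s) 1) := by
      rw [frontier_wedge_inter_eq, measure_mono_null hFU hnull, add_zero]

open Classical in
noncomputable def sphereProj (x : E) : Sph :=
  if hx : x = 0 then Classical.arbitrary Sph
  else ⟨‖x‖⁻¹ • x, by simp [norm_smul, hx]⟩

lemma coe_sphereProj {x : E} (hx : x ≠ 0) : (sphereProj x : E) = ‖x‖⁻¹ • x := by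
  simp [sphereProj, hx]

lemma measurable_sphereProj : Measurable (sphereProj : E → Sph) := by
  refine (MeasurableEmbedding.subtype_coe isClosed_sphere.measurableSet).measurable_comp_iff.1 ?_
  have : ((↑) ∘ sphereProj : E → E) =
      piecewise {0} (fun _ ↦ (Classical.arbitrary Sph : E)) (fun x ↦ ‖x‖⁻¹ • x) := by
    ext1 x
    by_cases hx : x = 0 <;> simp [sphereProj, hx]
  rw [this]
  exact Measurable.piecewise (measurableSet_singleton 0) measurable_const
    (measurable_norm.inv.smul measurable_id)

lemma sphProjExt_eq_sphereProj (f : C(Sph, ℝ)) {x : E} (hx : x ≠ 0) :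
    sphProjExt f x = f (sphereProj x) := by
  simp [sphProjExt, sphereProj, hx]

lemma preimage_sphereProj_inter_eq_wedge (s : Set Sph) (r : ℝ) :
    sphereProj ⁻¹' s ∩ {x : E | 0 < ‖x‖ ∧ ‖x‖ < r} = Wedge (Subtype.val '' s) r := by
  ext x
  simp only [mem_inter_iff, mem_preimage, Wedge, mem_ofPred_eq]
  constructor
  · rintro ⟨hs, hx0, hxr⟩
    exact ⟨hx0, hxr, _, hs, coe_sphereProj (norm_pos_iff.1 hx0)⟩
  · rintro ⟨hx0, hxr, u, hu, hux⟩
    have : sphereProj x = u :=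
      Subtype.ext ((coe_sphereProj (norm_pos_iff.1 hx0)).trans hux.symm)
    exact ⟨this ▸ hu, hx0, hxr⟩

lemma integrable_comp_sphereProj (μ : Measure E) [IsFiniteMeasure μ] (f : C(Sph, ℝ)) :
    Integrable (fun x ↦ f (sphereProj x)) μ :=
  (integrable_const ‖f‖).mono'
    (f.continuous.measurable.comp measurable_sphereProj).aestronglyMeasurable
    (.of_forall fun _ ↦ f.norm_coe_le_norm _)

noncomputable def angularDistribution (μ : Measure E) [IsFiniteMeasure μ] :
    ProbabilityMeasure Sph :=
  FiniteMeasure.normalize ⟨μ.map sphereProj, inferInstance⟩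

section AngularDistribution

variable {μ : Measure (EuclideanSpace ℝ (Fin n))} [IsFiniteMeasure μ] (hμ : μ ≠ 0)
include hμ

lemma measureReal_angularDistribution {s : Set Sph} (hs : MeasurableSet s) :
    (angularDistribution μ : Measure Sph).real s = μ.real (sphereProj ⁻¹' s) / μ.real univ := by
  rw [angularDistribution, FiniteMeasure.measureReal_normalize_mk
      ((Measure.map_ne_zero_iff measurable_sphereProj.aemeasurable).2 hμ),
    map_measureReal_apply measurable_sphereProj hs,
    map_measureReal_apply measurable_sphereProj .univ, preimage_univ]

lemma integral_angularDistribution (f : C(Sph, ℝ)) :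
    ∫ u, f u ∂(angularDistribution μ : Measure Sph) =
      (μ.real univ)⁻¹ * ∫ x, f (sphereProj x) ∂μ := by
  rw [angularDistribution, FiniteMeasure.integral_normalize_mk
      ((Measure.map_ne_zero_iff measurable_sphereProj.aemeasurable).2 hμ),
    integral_map measurable_sphereProj.aemeasurable f.continuous.aestronglyMeasurable,
    map_measureReal_apply measurable_sphereProj .univ, preimage_univ]

end AngularDistribution

lemma volume_puncturedBall : volume {x : E | 0 < ‖x‖ ∧ ‖x‖ < 1} = volume (ball (0 : E) 1) := by
  rw [puncturedBall_eq, measure_sdiff_null (measure_singleton 0)]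

instance : IsFiniteMeasure (volume.restrict {x : E | 0 < ‖x‖ ∧ ‖x‖ < 1}) :=
  isFiniteMeasure_restrict.2 (volume_puncturedBall.trans_lt measure_ball_lt_top).ne

/-- The normalized surface measure on the unit sphere. -/
noncomputable def uniformSphere : ProbabilityMeasure Sph :=
  angularDistribution (volume.restrict {x : E | 0 < ‖x‖ ∧ ‖x‖ < 1})

lemma volume_restrict_puncturedBall_ne_zero :
    volume.restrict {x : E | 0 < ‖x‖ ∧ ‖x‖ < 1} ≠ 0 := by
  rw [Ne, Measure.restrict_eq_zero, volume_puncturedBall]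
  exact (measure_ball_pos _ _ one_pos).ne'

lemma measureReal_uniformSphere {s : Set Sph} (hs : MeasurableSet s) :
    (uniformSphere (n := n) : Measure Sph).real s =
      volume.real (Wedge (Subtype.val '' s) 1) / volume.real (ball (0 : E) 1) := by
  rw [uniformSphere, measureReal_angularDistribution volume_restrict_puncturedBall_ne_zero hs,
    measureReal_restrict_apply (measurable_sphereProj hs), measureReal_restrict_apply_univ,
    preimage_sphereProj_inter_eq_wedge, measureReal_def, measureReal_def, volume_puncturedBall]
  rfl

lemma uniformSphere_frontier_eq_zero_iff (s : Set Sph) :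
    (uniformSphere (n := n) : Measure Sph) (frontier s) = 0 ↔
      volume (frontier (Wedge (Subtype.val '' s) 1)) = 0 := by
  have hW : volume (Wedge (Subtype.val '' frontier s) 1) ≠ ⊤ :=
    (measure_mono (wedge_subset_ball _ 1)).trans_lt measure_ball_lt_top |>.ne
  rw [← measureReal_eq_zero_iff, measureReal_uniformSphere isClosed_frontier.measurableSet,
    div_eq_zero_iff, volume_frontier_wedge, measureReal_eq_zero_iff hW,
    or_iff_left volume_real_ball_pos.ne']

lemma integral_uniformSphere (f : C(Sph, ℝ)) :
    ∫ u, f u ∂(uniformSphere (n := n) : Measure Sph) =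
      1 / volume.real (ball (0 : E) 1) * ∫ x in ball (0 : E) 1, sphProjExt f x := by
  have hU : MeasurableSet {x : E | 0 < ‖x‖ ∧ ‖x‖ < 1} :=
    puncturedBall_eq 1 ▸ measurableSet_ball.diff (measurableSet_singleton 0)
  rw [uniformSphere, integral_angularDistribution volume_restrict_puncturedBall_ne_zero,
    measureReal_restrict_apply_univ, measureReal_def, volume_puncturedBall, one_div,
    setIntegral_congr_fun hU fun x hx ↦ (sphProjExt_eq_sphereProj f (norm_pos_iff.1 hx.1)).symm,
    puncturedBall_eq, setIntegral_congr_set (sdiff_null_ae_eq_self (measure_singleton 0))]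
  rfl

section Empirical

variable {T : Set (EuclideanSpace ℝ (Fin n))}
  (hfin : ∀ S : Set (EuclideanSpace ℝ (Fin n)), Bornology.IsBounded S → (T ∩ S).Finite)
include hfin

noncomputable def empiricalSphere (r : ℝ) : ProbabilityMeasure Sph :=
  haveI := isFiniteMeasure_count_restrict hfin r
  angularDistribution (Measure.count.restrict (T ∩ {x : E | 0 < ‖x‖ ∧ ‖x‖ < r}))

variable {r : ℝ} (hne : (T ∩ {x : EuclideanSpace ℝ (Fin n) | 0 < ‖x‖ ∧ ‖x‖ < r}).Nonempty)
include hne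

lemma measureReal_empiricalSphere {s : Set Sph} (hs : MeasurableSet s) :
    (empiricalSphere hfin r : Measure Sph).real s =
      cnt (T ∩ Wedge (Subtype.val '' s) r) / cnt (T ∩ {x : E | 0 < ‖x‖ ∧ ‖x‖ < r}) := by
  have := isFiniteMeasure_count_restrict hfin r
  have hA := finite_inter_puncturedBall hfin r
  have hW : sphereProj ⁻¹' s ∩ (T ∩ {x : E | 0 < ‖x‖ ∧ ‖x‖ < r}) =
      T ∩ Wedge (Subtype.val '' s) r := by
    rw [inter_left_comm, preimage_sphereProj_inter_eq_wedge]
  rw [empiricalSphere, measureReal_angularDistribution (Measure.count_restrict_ne_zero hne) hs,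
    measureReal_restrict_apply (measurable_sphereProj hs), measureReal_restrict_apply_univ, hW,
    Measure.count_real_eq_cnt hA, Measure.count_real_eq_cnt (hA.subset (hW ▸ inter_subset_right))]

lemma integral_empiricalSphere (f : C(Sph, ℝ)) :
    ∫ u, f u ∂(empiricalSphere hfin r : Measure Sph) =
      (cnt (T ∩ {x : E | 0 < ‖x‖ ∧ ‖x‖ < r}))⁻¹ *
        ∑ᶠ x ∈ T ∩ {x : E | 0 < ‖x‖ ∧ ‖x‖ < r}, sphProjExt f x := by
  have := isFiniteMeasure_count_restrict hfin r
  have hA := finite_inter_puncturedBall hfin r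
  have hsum : ∫ x in T ∩ {x : E | 0 < ‖x‖ ∧ ‖x‖ < r}, f (sphereProj x) ∂Measure.count =
      ∑ x ∈ hA.toFinset, f (sphereProj x) := by
    conv_lhs => rw [← hA.coe_toFinset]
    rw [setIntegral_finset _ (by rw [hA.coe_toFinset]; exact integrable_comp_sphereProj _ f)]
    simp only [count_real_singleton, one_smul]
  rw [empiricalSphere, integral_angularDistribution (Measure.count_restrict_ne_zero hne),
    measureReal_restrict_apply_univ, Measure.count_real_eq_cnt hA, hsum,
    finsum_mem_eq_finite_toFinset_sum _ hA]
  refine congrArg _ (Finset.sum_congr rfl fun x hx ↦ ?_)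
  rw [sphProjExt_eq_sphereProj f (norm_pos_iff.1 (hA.mem_toFinset.1 hx).2.1)]

end Empirical

section Limit

variable {T : Set (EuclideanSpace ℝ (Fin n))}
  (hfin : ∀ S : Set (EuclideanSpace ℝ (Fin n)), Bornology.IsBounded S → (T ∩ S).Finite)
  (hTi : T.Infinite)
include hfin hTi

lemma angularCond_iff_tendsto_empiricalSphere :
    AngularCond T ↔ Tendsto (empiricalSphere hfin) atTop (𝓝 uniformSphere) := by
  rw [angularCond_iff_forall_sphere, ProbabilityMeasure.tendsto_iff_forall_tendsto_measureReal]
  refine forall_congr' fun s ↦ forall_congr' fun hs ↦ ?_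
  rw [uniformSphere_frontier_eq_zero_iff, measureReal_uniformSphere hs,
    ← tendsto_div_cnt_puncturedBall_iff hfin hTi]
  refine imp_congr_right fun _ ↦ tendsto_congr' ?_
  filter_upwards [eventually_inter_puncturedBall_nonempty hTi] with r hne
  exact (measureReal_empiricalSphere hfin hne hs).symm

lemma tendsto_empiricalSphere_iff :
    Tendsto (empiricalSphere hfin) atTop (𝓝 uniformSphere) ↔
      ∀ f : C(Sph, ℝ), Tendsto
        (fun r ↦ (1 / NN T r) * ∑ᶠ x ∈ T ∩ {x : E | 0 < ‖x‖ ∧ ‖x‖ < r}, sphProjExt f x) atTop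
        (𝓝 ((1 / volume.real (ball (0 : E) 1)) * ∫ x in ball (0 : E) 1, sphProjExt f x)) := by
  rw [ProbabilityMeasure.tendsto_iff_forall_continuousMap_integral_tendsto]
  refine forall_congr' fun f ↦ ?_
  simp only [integral_uniformSphere, one_div_mul_eq_div]
  rw [← tendsto_div_cnt_puncturedBall_iff hfin hTi]
  refine tendsto_congr' ?_
  filter_upwards [eventually_inter_puncturedBall_nonempty hTi] with r hne
  rw [integral_empiricalSphere hfin hne, inv_mul_eq_div]

end Limit

end

theorem angular_condition_iff_continuous_test_general
    {n : ℕ} (T : Set (EuclideanSpace ℝ (Fin n)))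
    (hTi : T.Infinite)
    (hfin : ∀ S : Set (EuclideanSpace ℝ (Fin n)), Bornology.IsBounded S → (T ∩ S).Finite) :
    AngularCond T ↔
      ∀ f : C(sphere (0 : EuclideanSpace ℝ (Fin n)) 1, ℝ),
        Tendsto
          (fun r => (1 / NN T r) *
            ∑ᶠ x ∈ T ∩ {x : EuclideanSpace ℝ (Fin n) | 0 < ‖x‖ ∧ ‖x‖ < r}, sphProjExt f x)
          atTop
          (𝓝 ((1 / (volume (ball (0 : EuclideanSpace ℝ (Fin n)) 1)).toReal) *
            ∫ x in ball (0 : EuclideanSpace ℝ (Fin n)) 1, sphProjExt f x)) := by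
  have := nontrivial_of_nontrivial hTi.nontrivial
  rw [angularCond_iff_tendsto_empiricalSphere hfin hTi, tendsto_empiricalSphere_iff hfin hTi]
  rfl

theorem angular_condition_iff_continuous_test
    {n : ℕ} (hn : 1 ≤ n) (T : Set (EuclideanSpace ℝ (Fin n)))
    (hTc : T.Countable) (hTi : T.Infinite)
    (hfin : ∀ S : Set (EuclideanSpace ℝ (Fin n)), Bornology.IsBounded S → (T ∩ S).Finite) :
    AngularCond T ↔
      ∀ f : C(sphere (0 : EuclideanSpace ℝ (Fin n)) 1, ℝ),
        Tendsto
          (fun r => (1 / NN T r) *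
            ∑ᶠ x ∈ T ∩ {x : EuclideanSpace ℝ (Fin n) | 0 < ‖x‖ ∧ ‖x‖ < r}, sphProjExt f x)
          atTop
          (𝓝 ((1 / (volume (ball (0 : EuclideanSpace ℝ (Fin n)) 1)).toReal) *
            ∫ x in ball (0 : EuclideanSpace ℝ (Fin n)) 1, sphProjExt f x)) :=
  angular_condition_iff_continuous_test_general T hTi hfin
end

section
/- For every n ≥ 1 and every c with 0 ≤ c ≤ 1, the Lebesgue measure of the hyperspherical cap {x ∈ ℝⁿ : |x| ≤ 1 and x₁ ≥ c} equals (π^{n/2} / (2 Γ(n/2 + 1))) · I_{1−c²}((n+1)/2, 1/2). -/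
open MeasureTheory Metric Filter Topology Real

/-- The incomplete Beta function `B_x(a, b) = ∫₀ˣ t^(a-1) (1-t)^(b-1) dt`. -/
noncomputable def incBeta (x a b : ℝ) : ℝ :=
  ∫ t in (0 : ℝ)..x, t ^ (a - 1) * (1 - t) ^ (b - 1)

/-- The (complete) Beta function `B(a, b) = Γ(a)Γ(b)/Γ(a+b)`. -/
noncomputable def betaFn (a b : ℝ) : ℝ :=
  Real.Gamma a * Real.Gamma b / Real.Gamma (a + b)

/-- The regularized incomplete Beta function `I_x(a, b) = B_x(a,b)/B(a,b)`. -/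
noncomputable def regIncBeta (x a b : ℝ) : ℝ :=
  incBeta x a b / betaFn a b

/-!
Slicing the unit ball of `ℝ^(m+1)` by the first coordinate, the slice at height `t` is an
`m`-ball of radius `√(1 - t²)`, so by Fubini the cap has volume
`√π ^ m / Γ(m/2 + 1) * ∫_c^1 (1 - t²)^(m/2) dt`. The substitution `u = 1 - t²` turns this
integral into `B_{1-c²}((m+2)/2, 1/2) / 2`, and `Γ(1/2) = √π` reconciles the constants.
-/

open Set

lemma volume_setOf_sum_sq_le {ι : Type*} [Fintype ι] {r : ℝ} (hr : 0 ≤ r) :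
    volume {z : ι → ℝ | ∑ i, z i ^ 2 ≤ r ^ 2} =
      ENNReal.ofReal
        (√π ^ Fintype.card ι / Gamma (Fintype.card ι / 2 + 1) * r ^ Fintype.card ι) := by
  rcases isEmpty_or_nonempty ι with _ | _
  · simp [Measure.volume_pi_eq_dirac (0 : ι → ℝ), sq_nonneg]
  · have hball : {z : ι → ℝ | ∑ i, z i ^ 2 ≤ r ^ 2} =
        WithLp.toLp 2 ⁻¹' closedBall (0 : EuclideanSpace ℝ ι) r := by
      rw [EuclideanSpace.closedBall_zero_eq r hr]; rfl
    rw [hball, (PiLp.volume_preserving_toLp ι).measure_preimage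
      measurableSet_closedBall.nullMeasurableSet, EuclideanSpace.volume_closedBall,
      ← ENNReal.ofReal_pow hr, ← ENNReal.ofReal_mul (by positivity), mul_comm]

lemma EuclideanSpace.norm_le_one_iff_sum_sq_le_one {ι : Type*} [Fintype ι]
    (x : EuclideanSpace ℝ ι) :
    ‖x‖ ≤ 1 ↔ ∑ i, x i ^ 2 ≤ 1 := by
  simpa using Set.ext_iff.1 (EuclideanSpace.closedBall_zero_eq 1 zero_le_one) x

lemma volume_norm_le_one_and_apply_zero_mem {m : ℕ} {s : Set ℝ} (hs : MeasurableSet s) :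
    volume {x : EuclideanSpace ℝ (Fin (m + 1)) | ‖x‖ ≤ 1 ∧ x 0 ∈ s} =
      ∫⁻ t in s, volume {z : Fin m → ℝ | t ^ 2 + ∑ i, z i ^ 2 ≤ 1} := by
  set Q : Set (ℝ × (Fin m → ℝ)) := {p | p.1 ^ 2 + ∑ i, p.2 i ^ 2 ≤ 1}
  have hQ : MeasurableSet Q := measurableSet_le (by fun_prop) (by fun_prop)
  have hcoord : {x : EuclideanSpace ℝ (Fin (m + 1)) | ‖x‖ ≤ 1 ∧ x 0 ∈ s} =
      WithLp.ofLp ⁻¹'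
        (MeasurableEquiv.piFinSuccAbove (fun _ ↦ ℝ) 0 ⁻¹' (Q ∩ s ×ˢ univ)) := by
    ext x
    simp [Q, EuclideanSpace.norm_le_one_iff_sum_sq_le_one, Fin.sum_univ_succ, Fin.tail,
      MeasurableEquiv.piFinSuccAbove]
  have hQs : MeasurableSet (Q ∩ s ×ˢ univ) := hQ.inter (hs.prod .univ)
  rw [hcoord, (PiLp.volume_preserving_ofLp _).measure_preimage
      ((MeasurableEquiv.piFinSuccAbove _ 0).measurable hQs).nullMeasurableSet,
    (volume_preserving_piFinSuccAbove _ 0).measure_preimage hQs.nullMeasurableSet,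
    ← Measure.restrict_apply' (hs.prod .univ), Measure.volume_eq_prod,
    ← Measure.prod_restrict, Measure.restrict_univ, Measure.prod_apply hQ]
  rfl

lemma volume_sq_add_sum_sq_le_one {ι : Type*} [Fintype ι] {t : ℝ} (ht : t ^ 2 ≤ 1) :
    volume {z : ι → ℝ | t ^ 2 + ∑ i, z i ^ 2 ≤ 1} =
      ENNReal.ofReal (√π ^ Fintype.card ι / Gamma (Fintype.card ι / 2 + 1) *
        (1 - t ^ 2) ^ ((Fintype.card ι : ℝ) / 2)) := by
  have h1t : 0 ≤ 1 - t ^ 2 := sub_nonneg.2 ht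
  have hslice : {z : ι → ℝ | t ^ 2 + ∑ i, z i ^ 2 ≤ 1} =
      {z | ∑ i, z i ^ 2 ≤ √(1 - t ^ 2) ^ 2} := by
    ext z
    simp only [mem_ofPred_eq, sq_sqrt h1t]
    constructor <;> intro h <;> linarith
  rw [hslice, volume_setOf_sum_sq_le (sqrt_nonneg _), rpow_div_two_eq_sqrt _ h1t, rpow_natCast]

theorem volume_norm_le_one_and_le_apply_zero {m : ℕ} {c : ℝ} (hc : -1 ≤ c) :
    volume {x : EuclideanSpace ℝ (Fin (m + 1)) | ‖x‖ ≤ 1 ∧ c ≤ x 0} =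
      ENNReal.ofReal (√π ^ m / Gamma (m / 2 + 1) *
        ∫ t in Ioo c 1, (1 - t ^ 2) ^ ((m : ℝ) / 2)) := by
  set F : ℝ → ℝ := fun t ↦ √π ^ m / Gamma (m / 2 + 1) * (1 - t ^ 2) ^ ((m : ℝ) / 2)
  have hslice : ∀ t ∈ Ici c, volume {z : Fin m → ℝ | t ^ 2 + ∑ i, z i ^ 2 ≤ 1} =
      (Icc c 1).indicator (fun t ↦ ENNReal.ofReal (F t)) t := by
    intro t (hct : c ≤ t)
    by_cases ht1 : t ≤ 1
    · rw [indicator_of_mem (show t ∈ Icc c 1 from ⟨hct, ht1⟩),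
        volume_sq_add_sum_sq_le_one (by nlinarith), Fintype.card_fin]
    · rw [indicator_of_notMem (fun h ↦ ht1 h.2)]
      convert measure_empty (μ := (volume : Measure (Fin m → ℝ)))
      refine eq_empty_of_forall_notMem fun z (hz : t ^ 2 + ∑ i, z i ^ 2 ≤ 1) ↦ ?_
      nlinarith [Finset.sum_nonneg fun i (_ : i ∈ Finset.univ) ↦ sq_nonneg (z i)]
  have hF : IntegrableOn F (Ioo c 1) :=
    ((continuous_const.mul ((continuous_rpow_const (by positivity)).comp
      (by fun_prop))).integrableOn_Icc).mono_set Ioo_subset_Icc_self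
  have hF0 : 0 ≤ᵐ[volume.restrict (Ioo c 1)] F := by
    refine (ae_restrict_iff' measurableSet_Ioo).2 (Eventually.of_forall fun t ht ↦ ?_)
    have : 0 ≤ Gamma (m / 2 + 1) := (Gamma_pos_of_pos (by positivity)).le
    have : 0 ≤ 1 - t ^ 2 := by nlinarith [ht.1, ht.2]
    positivity
  calc volume {x : EuclideanSpace ℝ (Fin (m + 1)) | ‖x‖ ≤ 1 ∧ c ≤ x 0}
      = ∫⁻ t in Ici c, volume {z : Fin m → ℝ | t ^ 2 + ∑ i, z i ^ 2 ≤ 1} :=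
        volume_norm_le_one_and_apply_zero_mem measurableSet_Ici
    _ = ∫⁻ t in Ici c, (Icc c 1).indicator (fun t ↦ ENNReal.ofReal (F t)) t :=
        setLIntegral_congr_fun measurableSet_Ici hslice
    _ = ∫⁻ t in Ioo c 1, ENNReal.ofReal (F t) := by
        rw [lintegral_indicator measurableSet_Icc, Measure.restrict_restrict measurableSet_Icc,
          inter_eq_left.2 Icc_subset_Ici_self, setLIntegral_congr Ioo_ae_eq_Icc]
    _ = _ := by rw [← ofReal_integral_eq_lintegral_ofReal hF hF0, integral_const_mul]

lemma integral_Ioo_eq_integral_Ioo_comp_one_sub_sq (f : ℝ → ℝ) {c : ℝ} (hc : 0 ≤ c) :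
    ∫ t in Ioo 0 (1 - c ^ 2), f t = ∫ s in Ioo c 1, 2 * s * f (1 - s ^ 2) := by
  have himage : (fun s : ℝ ↦ 1 - s ^ 2) '' Ioo c 1 = Ioo 0 (1 - c ^ 2) := by
    ext t
    constructor
    · rintro ⟨s, ⟨hcs, hs1⟩, rfl⟩
      constructor <;> nlinarith
    · rintro ⟨ht0, htc⟩
      refine ⟨√(1 - t), ⟨?_, ?_⟩, by simp [sq_sqrt (by nlinarith : 0 ≤ 1 - t)]⟩
      · exact (lt_sqrt hc).2 (by linarith)
      · exact (sqrt_lt' one_pos).2 (by linarith)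
  have hderiv :
      ∀ s ∈ Ioo c 1, HasDerivWithinAt (fun s : ℝ ↦ 1 - s ^ 2) (-(2 * s)) (Ioo c 1) s :=
    fun s _ ↦ by simpa using ((hasDerivAt_pow 2 s).const_sub 1).hasDerivWithinAt
  have hinj : InjOn (fun s : ℝ ↦ 1 - s ^ 2) (Ioo c 1) := fun a ha b hb hab ↦ by
    nlinarith [ha.1, hb.1]
  rw [← himage, integral_image_eq_integral_abs_deriv_smul measurableSet_Ioo hderiv hinj]
  refine setIntegral_congr_fun measurableSet_Ioo fun s hs ↦ ?_
  simp [abs_of_pos (hc.trans_lt hs.1)]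

lemma incBeta_one_sub_sq_one_half (a : ℝ) {c : ℝ} (hc0 : 0 ≤ c) (hc1 : c ≤ 1) :
    incBeta (1 - c ^ 2) a (1 / 2) = 2 * ∫ s in Ioo c 1, (1 - s ^ 2) ^ (a - 1) := by
  rw [incBeta, intervalIntegral.integral_of_le (by nlinarith), integral_Ioc_eq_integral_Ioo,
    integral_Ioo_eq_integral_Ioo_comp_one_sub_sq _ hc0, ← integral_const_mul]
  refine setIntegral_congr_fun measurableSet_Ioo fun s hs ↦ ?_
  have hs0 : 0 < s := hc0.trans_lt hs.1
  have : (1 - (1 - s ^ 2)) ^ ((1 : ℝ) / 2 - 1) = s⁻¹ := by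
    rw [sub_sub_cancel, ← rpow_natCast, ← rpow_mul hs0.le]
    norm_num [rpow_neg_one]
  rw [this]
  field_simp

theorem volume_hyperspherical_cap
    {n : ℕ} (hn : 1 ≤ n) (c : ℝ) (hc0 : 0 ≤ c) (hc1 : c ≤ 1) :
    (volume {x : EuclideanSpace ℝ (Fin n) | ‖x‖ ≤ 1 ∧ c ≤ x ⟨0, hn⟩}).toReal =
      Real.pi ^ ((n : ℝ) / 2) / (2 * Real.Gamma ((n : ℝ) / 2 + 1)) *
        regIncBeta (1 - c ^ 2) (((n : ℝ) + 1) / 2) (1 / 2) := by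
  obtain ⟨m, rfl⟩ : ∃ m, n = m + 1 := ⟨n - 1, by omega⟩
  have hint_nonneg : 0 ≤ ∫ t in Ioo c 1, (1 - t ^ 2) ^ ((m : ℝ) / 2) :=
    setIntegral_nonneg measurableSet_Ioo fun t ht ↦ rpow_nonneg (by nlinarith [ht.1, ht.2]) _
  have hπ : π ^ (((m + 1 : ℕ) : ℝ) / 2) = √π ^ m * √π := by
    rw [rpow_div_two_eq_sqrt _ pi_pos.le, rpow_natCast, pow_succ]
  have ha : ((m + 1 : ℕ) + 1 : ℝ) / 2 = m / 2 + 1 := by push_cast; ring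
  have hab : (m / 2 + 1 : ℝ) + 1 / 2 = (m + 1) / 2 + 1 := by ring
  rw [Fin.zero_eta, volume_norm_le_one_and_le_apply_zero (by linarith),
    ENNReal.toReal_ofReal (by positivity), hπ, regIncBeta, betaFn, ha,
    incBeta_one_sub_sq_one_half _ hc0 hc1, add_sub_cancel_right,
    Gamma_one_half_eq, hab]
  push_cast
  field_simp
end

section
/- For every n ≥ 1 and every λ with 0 ≤ λ ≤ 2, the 2n-dimensional Lebesgue measure of the region Ψ(λ) = {(a, b) ∈ ℝⁿ × ℝⁿ : |a| ≤ 1, |b| ≤ 1, |a − b| ≤ λ} equals (2πⁿ / (n Γ(n/2) Γ((n+1)/2) Γ(1/2))) · [ λⁿ · B_{1−λ²/4}((n+1)/2, 1/2) + 2ⁿ · B_{λ²/4}((n+1)/2, (n+1)/2) ]. -/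
/-!
Shearing `(a, b) ↦ (a - b, b)` turns the region into the pairs `(c, b)` with `‖c‖ ≤ λ` and `b` in
the lens `B ∩ (B - c)` of two unit balls. Its volume depends only on `r = ‖c‖`; slicing
perpendicularly to `c` gives `2 ωₙ₋₁ ∫_{r/2}^1 (1 - u²)^((n-1)/2) du`, where `ωₖ` is the volume of
the unit ball of `ℝᵏ`. Integrating this over `‖c‖ ≤ λ` in polar coordinates and then by parts in
`r` produces `λⁿ` times the lens volume at `r = λ` plus `∫_0^λ rⁿ (1 - r²/4)^((n-1)/2) dr`; the
substitutions `t = 1 - u²` and `t = r²/4` turn these into the two incomplete Beta functions.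
-/

open MeasureTheory Metric Filter Topology Real

open Set

/-- `unitBallVolume m * capIntegral (m / 2) r` is the volume of the cap `{x ∈ B : x₀ ≥ r / 2}` of
the unit ball `B` of `ℝᵐ⁺¹`. -/
noncomputable def capIntegral (q r : ℝ) : ℝ :=
  ∫ u in (r / 2)..1, (1 - u ^ 2) ^ q

section capIntegral

variable {q : ℝ}

lemma continuous_one_sub_sq_rpow (hq : 0 ≤ q) : Continuous fun u : ℝ => (1 - u ^ 2) ^ q :=
  (continuous_rpow_const hq).comp (by fun_prop)

lemma hasDerivAt_capIntegral (hq : 0 ≤ q) (r : ℝ) :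
    HasDerivAt (capIntegral q) (-(1 - (r / 2) ^ 2) ^ q / 2) r := by
  have hf := continuous_one_sub_sq_rpow hq
  have hupper : HasDerivAt (fun x => ∫ u in (0 : ℝ)..x, (1 - u ^ 2) ^ q)
      ((1 - (r / 2) ^ 2) ^ q) (r / 2) :=
    (hf.integral_hasStrictDerivAt 0 (r / 2)).hasDerivAt
  have hsplit : capIntegral q = fun r =>
      (∫ u in (0 : ℝ)..1, (1 - u ^ 2) ^ q) - ∫ u in (0 : ℝ)..(r / 2), (1 - u ^ 2) ^ q := by
    funext r
    rw [capIntegral, ← intervalIntegral.integral_interval_sub_left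
      (hf.intervalIntegrable _ _) (hf.intervalIntegrable _ _)]
  rw [hsplit]
  have hhalf : HasDerivAt (fun x : ℝ => x / 2) (1 / 2) r := (hasDerivAt_id r).div_const 2
  have := (hupper.comp r hhalf).const_sub (∫ u in (0 : ℝ)..1, (1 - u ^ 2) ^ q)
  exact this.congr_deriv (by ring)

lemma capIntegral_nonneg {r : ℝ} (h0 : 0 ≤ r) (h2 : r ≤ 2) : 0 ≤ capIntegral q r := by
  refine intervalIntegral.integral_nonneg (by linarith) fun u hu => ?_
  have : 0 ≤ 1 - u ^ 2 := by nlinarith [hu.1, hu.2]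
  positivity

lemma continuous_capIntegral (hq : 0 ≤ q) : Continuous (capIntegral q) :=
  continuous_iff_continuousAt.2 fun r => (hasDerivAt_capIntegral hq r).continuousAt

/-- The slice profile of the lens is symmetric about `s = -r/2`, and each half is a cap. -/
lemma integral_min_rpow_eq_two_mul_capIntegral (hq : 0 ≤ q) {r : ℝ} (h0 : 0 ≤ r) (h2 : r ≤ 2) :
    ∫ s in (-1 : ℝ)..(1 - r), min (1 - s ^ 2) (1 - (s + r) ^ 2) ^ q = 2 * capIntegral q r := by
  have hcont : Continuous fun s : ℝ => min (1 - s ^ 2) (1 - (s + r) ^ 2) ^ q :=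
    (continuous_rpow_const hq).comp (by fun_prop)
  have hleft : ∫ s in (-1 : ℝ)..(-r / 2), min (1 - s ^ 2) (1 - (s + r) ^ 2) ^ q =
      capIntegral q r := by
    rw [intervalIntegral.integral_congr (g := fun s => (1 - (-s) ^ 2) ^ q) fun s hs => ?_,
      intervalIntegral.integral_comp_neg (fun u => (1 - u ^ 2) ^ q), capIntegral]
    · ring_nf
    rw [uIcc_of_le (by linarith)] at hs
    simp only [neg_sq]
    rw [min_eq_left (by nlinarith [hs.1, hs.2])]
  have hright : ∫ s in (-r / 2)..(1 - r), min (1 - s ^ 2) (1 - (s + r) ^ 2) ^ q =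
      capIntegral q r := by
    rw [intervalIntegral.integral_congr (g := fun s => (1 - (s + r) ^ 2) ^ q) fun s hs => ?_,
      intervalIntegral.integral_comp_add_right (fun u => (1 - u ^ 2) ^ q), capIntegral]
    · ring_nf
    rw [uIcc_of_le (by linarith)] at hs
    rw [min_eq_right (by nlinarith [hs.1, hs.2])]
  rw [← intervalIntegral.integral_add_adjacent_intervals (b := -r / 2)
    (hcont.intervalIntegrable _ _) (hcont.intervalIntegrable _ _), hleft, hright, two_mul]

/-- Substitute `t = 1 - u²`. -/
lemma two_mul_capIntegral_eq_incBeta (hq : 0 ≤ q) {r : ℝ} (h0 : 0 < r) (h2 : r ≤ 2) :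
    2 * capIntegral q r = incBeta (1 - r ^ 2 / 4) (q + 1) (1 / 2) := by
  set g : ℝ → ℝ := fun t => t ^ q * (1 - t) ^ (-(1 / 2) : ℝ)
  have himage : (fun u => 1 - u ^ 2) '' uIcc (r / 2) 1 ⊆ Icc 0 (1 - r ^ 2 / 4) := by
    rintro _ ⟨u, hu, rfl⟩
    rw [uIcc_of_le (by linarith)] at hu
    constructor <;> nlinarith [hu.1, hu.2]
  have hg : ContinuousOn g (Icc 0 (1 - r ^ 2 / 4)) :=
    (continuous_rpow_const hq).continuousOn.mul <|
      ContinuousOn.rpow_const (by fun_prop) fun t ht => Or.inl (by nlinarith [ht.2])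
  have hsubst := intervalIntegral.integral_comp_mul_deriv' (a := r / 2) (b := 1)
    (f := fun u => 1 - u ^ 2) (f' := fun u => -2 * u)
    (fun u _ => by simpa using (hasDerivAt_pow 2 u).const_sub 1) (by fun_prop) (hg.mono himage)
  have hintegrand : EqOn (fun u => (g ∘ fun u => 1 - u ^ 2) u * (-2 * u))
      (fun u => -2 * (1 - u ^ 2) ^ q) (uIcc (r / 2) 1) := by
    intro u hu
    rw [uIcc_of_le (by linarith)] at hu
    have hu0 : 0 < u := by linarith [hu.1]
    have hsq : (u ^ 2) ^ (-(1 / 2) : ℝ) = u⁻¹ := by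
      rw [← Real.rpow_natCast, ← Real.rpow_mul hu0.le]
      norm_num [Real.rpow_neg_one]
    simp only [g, Function.comp, sub_sub_cancel, hsq]
    field_simp
  rw [intervalIntegral.integral_congr hintegrand, intervalIntegral.integral_const_mul,
    show (1 : ℝ) - 1 ^ 2 = 0 by norm_num, show 1 - (r / 2) ^ 2 = 1 - r ^ 2 / 4 by ring] at hsubst
  have hexp : ∀ t : ℝ, t ^ (q + 1 - 1) * (1 - t) ^ ((1 : ℝ) / 2 - 1) = g t := fun t => by
    norm_num [g]
  simp only [incBeta, hexp, capIntegral]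
  rw [intervalIntegral.integral_symm (1 - r ^ 2 / 4) 0, ← hsubst]
  ring

lemma pow_succ_mul_two_mul_capIntegral (m : ℕ) {lam : ℝ} (hq : 0 ≤ q) (h0 : 0 ≤ lam)
    (h2 : lam ≤ 2) :
    lam ^ (m + 1) * (2 * capIntegral q lam) =
      lam ^ (m + 1) * incBeta (1 - lam ^ 2 / 4) (q + 1) (1 / 2) := by
  rcases h0.eq_or_lt with rfl | hpos
  · simp
  · rw [two_mul_capIntegral_eq_incBeta hq hpos h2]

lemma integral_pow_mul_two_mul_capIntegral (m : ℕ) (hq : 0 ≤ q) (lam : ℝ) :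
    ∫ y in (0 : ℝ)..lam, y ^ m * (2 * capIntegral q y) =
      (lam ^ (m + 1) * (2 * capIntegral q lam) +
        ∫ y in (0 : ℝ)..lam, y ^ (m + 1) * (1 - (y / 2) ^ 2) ^ q) / ((m : ℝ) + 1) := by
  have hu : ∀ y ∈ uIcc 0 lam,
      HasDerivAt (fun y => 2 * capIntegral q y) (-(1 - (y / 2) ^ 2) ^ q) y :=
    fun y _ => ((hasDerivAt_capIntegral hq y).const_mul 2).congr_deriv (by ring)
  have hv : ∀ y ∈ uIcc 0 lam, HasDerivAt (fun y : ℝ => y ^ (m + 1) / ((m : ℝ) + 1)) (y ^ m) y :=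
    fun y _ => ((hasDerivAt_pow (m + 1) y).div_const _).congr_deriv (by push_cast; field_simp)
  have hparts := intervalIntegral.integral_mul_deriv_eq_deriv_mul hu hv
    (((continuous_one_sub_sq_rpow hq).comp (continuous_id.div_const 2)).neg.intervalIntegrable _ _)
    ((continuous_pow m).intervalIntegrable _ _)
  rw [intervalIntegral.integral_congr (g := fun y => 2 * capIntegral q y * y ^ m)
    fun y _ => mul_comm _ _, hparts]
  have hrest : ∫ y in (0 : ℝ)..lam, -(1 - (y / 2) ^ 2) ^ q * (y ^ (m + 1) / ((m : ℝ) + 1)) =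
      -(∫ y in (0 : ℝ)..lam, y ^ (m + 1) * (1 - (y / 2) ^ 2) ^ q) / ((m : ℝ) + 1) := by
    rw [← intervalIntegral.integral_neg, ← intervalIntegral.integral_div]
    exact intervalIntegral.integral_congr fun y _ => by ring
  rw [hrest, zero_pow (Nat.succ_ne_zero m)]
  ring

/-- Substitute `t = y² / 4`. -/
lemma integral_pow_mul_one_sub_sq_rpow_eq_incBeta (m : ℕ) {lam : ℝ} (h0 : 0 ≤ lam) :
    ∫ y in (0 : ℝ)..lam, y ^ (m + 1) * (1 - (y / 2) ^ 2) ^ ((m : ℝ) / 2) =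
      2 ^ (m + 1) * incBeta (lam ^ 2 / 4) ((m : ℝ) / 2 + 1) ((m : ℝ) / 2 + 1) := by
  have hhalf : (0 : ℝ) ≤ m / 2 := by positivity
  set g : ℝ → ℝ := fun t => t ^ ((m : ℝ) / 2) * (1 - t) ^ ((m : ℝ) / 2)
  have hg : Continuous g :=
    (continuous_rpow_const hhalf).mul ((continuous_rpow_const hhalf).comp (by fun_prop))
  have hsubst := intervalIntegral.integral_comp_mul_deriv (a := 0) (b := lam)
    (f := fun y => y ^ 2 / 4) (f' := fun y => y / 2)
    (fun y _ => ((hasDerivAt_pow 2 y).div_const 4).congr_deriv (by ring)) (by fun_prop) hg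
  have hintegrand : EqOn (fun y => 2 ^ (m + 1) * ((g ∘ fun y => y ^ 2 / 4) y * (y / 2)))
      (fun y => y ^ (m + 1) * (1 - (y / 2) ^ 2) ^ ((m : ℝ) / 2)) (uIcc 0 lam) := by
    intro y hy
    rw [uIcc_of_le h0] at hy
    have hpow : ((y / 2) ^ 2) ^ ((m : ℝ) / 2) = (y / 2) ^ m := by
      rw [← Real.rpow_natCast _ 2, ← Real.rpow_mul (by linarith [hy.1]), ← Real.rpow_natCast]
      ring_nf
    simp only [g, Function.comp, show y ^ 2 / 4 = (y / 2) ^ 2 by ring, hpow]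
    rw [div_pow]
    field_simp
    ring
  have hexp : ∀ t : ℝ, t ^ ((m : ℝ) / 2 + 1 - 1) * (1 - t) ^ ((m : ℝ) / 2 + 1 - 1) = g t :=
    fun t => by simp [g]
  simp only [incBeta, hexp]
  rw [← intervalIntegral.integral_congr hintegrand, intervalIntegral.integral_const_mul, hsubst]
  norm_num

end capIntegral

noncomputable def unitBallVolume (m : ℕ) : ℝ :=
  √π ^ m / Gamma ((m : ℝ) / 2 + 1)

lemma unitBallVolume_pos (m : ℕ) : 0 < unitBallVolume m :=
  div_pos (pow_pos (Real.sqrt_pos.2 Real.pi_pos) m) (Real.Gamma_pos_of_pos (by positivity))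

lemma volume_closedBall_zero_euclideanSpace (m : ℕ) {r : ℝ} (hr : 0 ≤ r) :
    volume (closedBall (0 : EuclideanSpace ℝ (Fin m)) r) =
      ENNReal.ofReal (r ^ m * unitBallVolume m) := by
  rcases m with _ | m
  · rw [volume_euclideanSpace_eq_dirac, Measure.dirac_apply_of_mem (mem_closedBall_self hr)]
    simp [unitBallVolume]
  · rw [EuclideanSpace.volume_closedBall, Fintype.card_fin, ← ENNReal.ofReal_pow hr,
      ← ENNReal.ofReal_mul (by positivity), unitBallVolume]

lemma measureReal_ball_zero_one_euclideanSpace (m : ℕ) :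
    volume.real (ball (0 : EuclideanSpace ℝ (Fin (m + 1))) 1) = unitBallVolume (m + 1) := by
  rw [measureReal_def, ← Measure.addHaar_closedBall_eq_addHaar_ball,
    volume_closedBall_zero_euclideanSpace _ zero_le_one, one_pow, one_mul,
    ENNReal.toReal_ofReal (unitBallVolume_pos _).le]

lemma unitBallVolume_succ_mul (m : ℕ) :
    unitBallVolume (m + 1) * unitBallVolume m =
      2 * π ^ (m + 1) / (((m + 1 : ℕ) : ℝ) * Gamma (((m + 1 : ℕ) : ℝ) / 2) *
        Gamma ((((m + 1 : ℕ) : ℝ) + 1) / 2) * Gamma (1 / 2)) := by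
  have hG : Gamma (((m + 1 : ℕ) : ℝ) / 2 + 1) =
      ((m + 1 : ℕ) : ℝ) / 2 * Gamma (((m + 1 : ℕ) : ℝ) / 2) := Real.Gamma_add_one (by positivity)
  have hsqrt : √π ^ (m + 1) * √π ^ m * √π = π ^ (m + 1) := by
    rw [mul_assoc, ← pow_succ, ← pow_add, ← two_mul, pow_mul, Real.sq_sqrt Real.pi_pos.le]
  have h1 : (0 : ℝ) < Gamma (((m + 1 : ℕ) : ℝ) / 2) := Real.Gamma_pos_of_pos (by positivity)
  have h2 : (0 : ℝ) < Gamma ((((m + 1 : ℕ) : ℝ) + 1) / 2) := Real.Gamma_pos_of_pos (by positivity)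
  rw [unitBallVolume, unitBallVolume, hG, Real.Gamma_one_half_eq,
    show (m : ℝ) / 2 + 1 = (((m + 1 : ℕ) : ℝ) + 1) / 2 by push_cast; ring]
  have := Real.sqrt_pos.2 Real.pi_pos
  field_simp
  linear_combination hsqrt

lemma volume_setOf_norm_sq_le (m : ℕ) {w : ℝ → ℝ} (hw : Measurable w) :
    volume {p : ℝ × EuclideanSpace ℝ (Fin m) | ‖p.2‖ ^ 2 ≤ w p.1} =
      ∫⁻ s in {s | 0 ≤ w s}, ENNReal.ofReal (w s ^ ((m : ℝ) / 2) * unitBallVolume m) := by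
  have hmeas : MeasurableSet {p : ℝ × EuclideanSpace ℝ (Fin m) | ‖p.2‖ ^ 2 ≤ w p.1} :=
    measurableSet_le (by fun_prop) (hw.comp measurable_fst)
  rw [Measure.volume_eq_prod, Measure.prod_apply hmeas,
    ← lintegral_indicator (measurableSet_le measurable_const hw)]
  refine lintegral_congr fun s => ?_
  by_cases hs : 0 ≤ w s
  · have hfiber : Prod.mk s ⁻¹' {p : ℝ × EuclideanSpace ℝ (Fin m) | ‖p.2‖ ^ 2 ≤ w p.1} =
        closedBall 0 √(w s) := by
      ext y
      simp [Real.le_sqrt (norm_nonneg y) hs]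
    rw [indicator_of_mem (show s ∈ {s | 0 ≤ w s} from hs), hfiber,
      volume_closedBall_zero_euclideanSpace m (Real.sqrt_nonneg _), Real.sqrt_eq_rpow,
      ← Real.rpow_natCast, ← Real.rpow_mul hs]
    ring_nf
  · have hfiber : Prod.mk s ⁻¹' {p : ℝ × EuclideanSpace ℝ (Fin m) | ‖p.2‖ ^ 2 ≤ w p.1} = ∅ := by
      ext y
      simp only [mem_preimage, mem_ofPred_eq, mem_empty_iff_false, iff_false, not_le]
      exact (not_le.1 hs).trans_le (sq_nonneg _)
    rw [indicator_of_notMem (show s ∉ {s | 0 ≤ w s} from hs), hfiber, measure_empty]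

noncomputable def lensVolume (m : ℕ) (r : ℝ) : ℝ :=
  unitBallVolume m * (2 * capIntegral ((m : ℝ) / 2) r)

lemma lensVolume_nonneg (m : ℕ) {r : ℝ} (h0 : 0 ≤ r) (h2 : r ≤ 2) : 0 ≤ lensVolume m r :=
  mul_nonneg (unitBallVolume_pos m).le (mul_nonneg zero_le_two (capIntegral_nonneg h0 h2))

lemma continuous_lensVolume (m : ℕ) : Continuous (lensVolume m) :=
  continuous_const.mul (continuous_const.mul (continuous_capIntegral (by positivity)))

lemma volume_lens_prod (m : ℕ) {r : ℝ} (h0 : 0 ≤ r) (h2 : r ≤ 2) :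
    volume {p : ℝ × EuclideanSpace ℝ (Fin m) |
        p.1 ^ 2 + ‖p.2‖ ^ 2 ≤ 1 ∧ (p.1 + r) ^ 2 + ‖p.2‖ ^ 2 ≤ 1} =
      ENNReal.ofReal (lensVolume m r) := by
  have hq : (0 : ℝ) ≤ m / 2 := by positivity
  set w : ℝ → ℝ := fun s => min (1 - s ^ 2) (1 - (s + r) ^ 2)
  have hset : {p : ℝ × EuclideanSpace ℝ (Fin m) |
      p.1 ^ 2 + ‖p.2‖ ^ 2 ≤ 1 ∧ (p.1 + r) ^ 2 + ‖p.2‖ ^ 2 ≤ 1} = {p | ‖p.2‖ ^ 2 ≤ w p.1} := by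
    ext p
    simp only [mem_ofPred_eq, w, le_min_iff]
    constructor <;> rintro ⟨h, h'⟩ <;> constructor <;> linarith
  have hsupport : {s | 0 ≤ w s} = Icc (-1) (1 - r) := by
    ext s
    simp only [mem_ofPred_eq, mem_Icc, w, le_min_iff]
    constructor
    · rintro ⟨h, h'⟩
      constructor <;> nlinarith
    · rintro ⟨h, h'⟩
      constructor <;> nlinarith
  have hcont : Continuous fun s => w s ^ ((m : ℝ) / 2) * unitBallVolume m :=
    ((continuous_rpow_const hq).comp (by fun_prop)).mul continuous_const
  have hnonneg : 0 ≤ᵐ[volume.restrict (Icc (-1) (1 - r))]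
      fun s => w s ^ ((m : ℝ) / 2) * unitBallVolume m := by
    filter_upwards [ae_restrict_mem measurableSet_Icc] with s hs
    have : 0 ≤ w s := by rw [← hsupport] at hs; exact hs
    have := (unitBallVolume_pos m).le
    positivity
  rw [hset, volume_setOf_norm_sq_le m (by fun_prop), hsupport,
    ← ofReal_integral_eq_lintegral_ofReal hcont.integrableOn_Icc hnonneg,
    integral_Icc_eq_integral_Ioc, ← intervalIntegral.integral_of_le (by linarith),
    intervalIntegral.integral_mul_const, integral_min_rpow_eq_two_mul_capIntegral hq h0 h2,
    lensVolume, mul_comm]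

section lens

variable {E F : Type*} [NormedAddCommGroup E] [NormedAddCommGroup F]

def lens (c : E) : Set E := {b | ‖b‖ ≤ 1 ∧ ‖b + c‖ ≤ 1}

lemma norm_toLp_prod_le_one_iff (p : ℝ × E) :
    ‖WithLp.toLp 2 p‖ ≤ 1 ↔ p.1 ^ 2 + ‖p.2‖ ^ 2 ≤ 1 := by
  rw [← sq_le_one_iff₀ (norm_nonneg _), WithLp.prod_norm_sq_eq_of_L2]
  simp

lemma preimage_toLp_lens (a : ℝ) :
    WithLp.toLp 2 ⁻¹' lens (WithLp.toLp 2 ((a, 0) : ℝ × E)) =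
      {p : ℝ × E | p.1 ^ 2 + ‖p.2‖ ^ 2 ≤ 1 ∧ (p.1 + a) ^ 2 + ‖p.2‖ ^ 2 ≤ 1} := by
  ext p
  rw [mem_preimage, lens, mem_ofPred_eq, ← WithLp.toLp_add, norm_toLp_prod_le_one_iff,
    norm_toLp_prod_le_one_iff]
  simp

variable [MeasurableSpace E] [BorelSpace E] [MeasurableSpace F] [BorelSpace F]

lemma measurableSet_lens (c : E) : MeasurableSet (lens c) :=
  ((isClosed_le continuous_norm continuous_const).inter
    (isClosed_le (continuous_id.add continuous_const).norm continuous_const)).measurableSet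

variable [InnerProductSpace ℝ E] [FiniteDimensional ℝ E] [InnerProductSpace ℝ F]
  [FiniteDimensional ℝ F]

lemma volume_lens_map (f : E ≃ₗᵢ[ℝ] F) (c : E) : volume (lens (f c)) = volume (lens c) := by
  have hpre : f ⁻¹' lens (f c) = lens c := by
    ext b
    simp only [lens, mem_preimage, mem_ofPred_eq, ← map_add, LinearIsometryEquiv.norm_map]
  rw [← hpre, f.measurePreserving.measure_preimage (measurableSet_lens _).nullMeasurableSet]

lemma volume_lens_congr_norm {c c' : E} (h : ‖c‖ = ‖c'‖) : volume (lens c) = volume (lens c') := by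
  rw [← Submodule.reflection_sub h, volume_lens_map]

lemma volume_lens {m : ℕ} (hE : Module.finrank ℝ E = m + 1) {c : E} (hc : ‖c‖ ≤ 2) :
    volume (lens c) = ENNReal.ofReal (lensVolume m ‖c‖) := by
  have hW : Module.finrank ℝ (WithLp 2 (ℝ × EuclideanSpace ℝ (Fin m))) = m + 1 := by
    rw [(WithLp.linearEquiv 2 ℝ (ℝ × EuclideanSpace ℝ (Fin m))).finrank_eq, Module.finrank_prod,
      Module.finrank_self, finrank_euclideanSpace_fin, add_comm]
  -- `WithLp 2 (ℝ × ℝᵐ)` is a model of `E` in which `c` becomes `(‖c‖, 0)`.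
  let f : E ≃ₗᵢ[ℝ] WithLp 2 (ℝ × EuclideanSpace ℝ (Fin m)) :=
    (stdOrthonormalBasis ℝ E).equiv (stdOrthonormalBasis ℝ _) (finCongr (hE.trans hW.symm))
  have hv : ‖f c‖ = ‖WithLp.toLp 2 ((‖c‖, 0) : ℝ × EuclideanSpace ℝ (Fin m))‖ := by
    rw [f.norm_map, WithLp.prod_norm_eq_of_L2]
    simp
  rw [← volume_lens_map f, volume_lens_congr_norm hv,
    ← (WithLp.volume_preserving_toLp ℝ (EuclideanSpace ℝ (Fin m))).measure_preimage
      (measurableSet_lens _).nullMeasurableSet, preimage_toLp_lens,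
    volume_lens_prod m (norm_nonneg c) hc]

end lens

section integration

variable {E : Type*} [NormedAddCommGroup E] [InnerProductSpace ℝ E] [FiniteDimensional ℝ E]
  [MeasurableSpace E] [BorelSpace E]

/-- The shear `(a, b) ↦ (a - b, b)` fibres the region over the difference `c = a - b`. -/
lemma volume_setOf_norm_sub_le_eq_lintegral_lens (lam : ℝ) :
    volume {p : E × E | ‖p.1‖ ≤ 1 ∧ ‖p.2‖ ≤ 1 ∧ ‖p.1 - p.2‖ ≤ lam} =
      ∫⁻ c in closedBall (0 : E) lam, volume (lens c) := by
  set S : Set (E × E) := {q | ‖q.1‖ ≤ lam ∧ ‖q.2‖ ≤ 1 ∧ ‖q.2 + q.1‖ ≤ 1}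
  have hS : MeasurableSet S :=
    ((isClosed_le continuous_fst.norm continuous_const).inter
      ((isClosed_le continuous_snd.norm continuous_const).inter
        (isClosed_le (continuous_snd.add continuous_fst).norm continuous_const))).measurableSet
  have hpre : (fun p : E × E => (p.1 - p.2, p.2)) ⁻¹' S =
      {p : E × E | ‖p.1‖ ≤ 1 ∧ ‖p.2‖ ≤ 1 ∧ ‖p.1 - p.2‖ ≤ lam} := by
    ext p
    simp only [S, mem_preimage, mem_ofPred_eq, add_sub_cancel]
    tauto
  have hfiber : ∀ c, volume (Prod.mk c ⁻¹' S) = (closedBall (0 : E) lam).indicator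
      (fun c => volume (lens c)) c := by
    intro c
    by_cases hc : ‖c‖ ≤ lam
    · rw [indicator_of_mem (mem_closedBall_zero_iff.2 hc)]
      congr 1
      ext b
      simp [S, lens, hc]
    · rw [indicator_of_notMem (mt mem_closedBall_zero_iff.1 hc)]
      convert measure_empty (μ := volume)
      ext b
      simp [S, hc]
  rw [← hpre, Measure.volume_eq_prod,
    (measurePreserving_sub_prod volume volume).measure_preimage hS.nullMeasurableSet,
    Measure.prod_apply hS, ← lintegral_indicator measurableSet_closedBall]
  simp only [hfiber]

lemma setIntegral_closedBall_fun_norm [Nontrivial E] (f : ℝ → ℝ) {lam : ℝ} (hlam : 0 ≤ lam) :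
    ∫ x in closedBall (0 : E) lam, f ‖x‖ = Module.finrank ℝ E * volume.real (ball (0 : E) 1) *
      ∫ y in (0 : ℝ)..lam, y ^ (Module.finrank ℝ E - 1) * f y := by
  have hind : (closedBall (0 : E) lam).indicator (fun x => f ‖x‖) =
      fun x => (Iic lam).indicator f ‖x‖ := by
    ext x
    simp [indicator]
  have hradial : EqOn (fun y => y ^ (Module.finrank ℝ E - 1) • (Iic lam).indicator f y)
      ((Ioc 0 lam).indicator fun y => y ^ (Module.finrank ℝ E - 1) * f y) (Ioi 0) := by
    intro y (hy : 0 < y)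
    by_cases hyl : y ≤ lam <;> simp [hy, hyl]
  rw [← integral_indicator measurableSet_closedBall, hind, integral_fun_norm_addHaar,
    setIntegral_congr_fun measurableSet_Ioi hradial, setIntegral_indicator measurableSet_Ioc,
    inter_eq_self_of_subset_right Ioc_subset_Ioi_self, ← intervalIntegral.integral_of_le hlam,
    nsmul_eq_mul, smul_eq_mul, mul_assoc]

end integration

theorem volume_pair_region
    {n : ℕ} (hn : 1 ≤ n) (lam : ℝ) (hlam0 : 0 ≤ lam) (hlam2 : lam ≤ 2) :
    (volume {p : EuclideanSpace ℝ (Fin n) × EuclideanSpace ℝ (Fin n) |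
        ‖p.1‖ ≤ 1 ∧ ‖p.2‖ ≤ 1 ∧ ‖p.1 - p.2‖ ≤ lam}).toReal =
      2 * Real.pi ^ n /
        ((n : ℝ) * Real.Gamma ((n : ℝ) / 2) * Real.Gamma (((n : ℝ) + 1) / 2) *
          Real.Gamma (1 / 2)) *
        (lam ^ n * incBeta (1 - lam ^ 2 / 4) (((n : ℝ) + 1) / 2) (1 / 2) +
          2 ^ n * incBeta (lam ^ 2 / 4) (((n : ℝ) + 1) / 2) (((n : ℝ) + 1) / 2)) := by
  obtain ⟨m, rfl⟩ : ∃ m, n = m + 1 := ⟨n - 1, by omega⟩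
  have hq : (0 : ℝ) ≤ m / 2 := by positivity
  have hE : Module.finrank ℝ (EuclideanSpace ℝ (Fin (m + 1))) = m + 1 := finrank_euclideanSpace_fin
  have hlens : ∀ c ∈ closedBall (0 : EuclideanSpace ℝ (Fin (m + 1))) lam,
      volume (lens c) = ENNReal.ofReal (lensVolume m ‖c‖) := fun c hc =>
    volume_lens hE ((mem_closedBall_zero_iff.1 hc).trans hlam2)
  have hnonneg : 0 ≤ᵐ[volume.restrict (closedBall (0 : EuclideanSpace ℝ (Fin (m + 1))) lam)]
      fun c => lensVolume m ‖c‖ := by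
    filter_upwards [ae_restrict_mem measurableSet_closedBall] with c hc
    exact lensVolume_nonneg m (norm_nonneg c) ((mem_closedBall_zero_iff.1 hc).trans hlam2)
  have harg : (((m + 1 : ℕ) : ℝ) + 1) / 2 = (m : ℝ) / 2 + 1 := by push_cast; ring
  rw [volume_setOf_norm_sub_le_eq_lintegral_lens,
    setLIntegral_congr_fun measurableSet_closedBall hlens, ← integral_eq_lintegral_of_nonneg_ae
      hnonneg ((continuous_lensVolume m).comp continuous_norm).aestronglyMeasurable,
    setIntegral_closedBall_fun_norm _ hlam0, hE, measureReal_ball_zero_one_euclideanSpace,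
    Nat.add_sub_cancel]
  simp only [lensVolume, mul_left_comm _ (unitBallVolume m), intervalIntegral.integral_const_mul]
  rw [integral_pow_mul_two_mul_capIntegral m hq,
    integral_pow_mul_one_sub_sq_rpow_eq_incBeta m hlam0,
    pow_succ_mul_two_mul_capIntegral m hq hlam0 hlam2, ← unitBallVolume_succ_mul, harg]
  push_cast
  field_simp
end

section
/- For every n ≥ 1, the function F_n(λ) = (1 / B((n+1)/2, 1/2)) · ( λⁿ · B_{1−λ²/4}((n+1)/2, 1/2) + 2ⁿ · B_{λ²/4}((n+1)/2, (n+1)/2) ) is differentiable at every λ ∈ (0, 2), with derivative F_n′(λ) = n λ^{n−1} · I_{1−λ²/4}((n+1)/2, 1/2). -/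
open MeasureTheory Metric Filter Topology Real

/-!
Both Beta integrals are differentiated by the fundamental theorem of calculus. At
`x = λ²/4` the two kernel terms are `λⁿ (1-x)^(a-1) x^(-1/2) (λ/2)` and
`2ⁿ x^(a-1) (1-x)^(a-1) (λ/2)` with `a = (n+1)/2`; since `x^(1/2) = λ/2` they are equal, and
they enter with opposite signs, so only the product-rule term `n λ^(n-1) B_{1-λ²/4}` survives.
-/

lemma hasDerivAt_incBeta {a b x : ℝ} (ha : 0 < a) (hx : x ∈ Set.Ioo (0 : ℝ) 1) :
    HasDerivAt (fun y => incBeta y a b) (x ^ (a - 1) * (1 - x) ^ (b - 1)) x := by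
  have hright : ∀ t < 1, ContinuousAt (fun t : ℝ => (1 - t) ^ (b - 1)) t := fun t ht =>
    (continuousAt_rpow_const _ _ (Or.inl (sub_pos.2 ht).ne')).comp
      (continuous_const.sub continuous_id).continuousAt
  have hcont : ContinuousOn (fun t : ℝ => t ^ (a - 1) * (1 - t) ^ (b - 1)) (Set.Ioo 0 1) :=
    fun t ht => ((continuousAt_rpow_const _ _ (Or.inl ht.1.ne')).mul
      (hright t ht.2)).continuousWithinAt
  have hint : IntervalIntegrable (fun t : ℝ => t ^ (a - 1) * (1 - t) ^ (b - 1)) volume 0 x := by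
    refine (intervalIntegral.intervalIntegrable_rpow' (by linarith)).mul_continuousOn ?_
    rw [Set.uIcc_of_le hx.1.le]
    exact fun t ht => (hright t (ht.2.trans_lt hx.2)).continuousWithinAt
  exact intervalIntegral.integral_hasDerivAt_right hint
    (hcont.stronglyMeasurableAtFilter isOpen_Ioo x hx)
    (hcont.continuousAt (isOpen_Ioo.mem_nhds hx))

lemma HasDerivAt.incBeta {f : ℝ → ℝ} {f' x a b : ℝ} (hf : HasDerivAt f f' x) (ha : 0 < a)
    (hfx : f x ∈ Set.Ioo (0 : ℝ) 1) :
    HasDerivAt (fun y => incBeta (f y) a b) (f x ^ (a - 1) * (1 - f x) ^ (b - 1) * f') x :=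
  (hasDerivAt_incBeta ha hfx).comp x hf

lemma sq_div_four_rpow {l : ℝ} (hl : 0 ≤ l) (r : ℝ) : (l ^ 2 / 4) ^ r = (l / 2) ^ (2 * r) := by
  rw [show l ^ 2 / 4 = (l / 2) ^ (2 : ℝ) by rw [rpow_two]; ring, ← rpow_mul (by positivity)]

lemma incBeta_kernel_terms_cancel (n : ℕ) {l : ℝ} (hl : 0 < l) (c : ℝ) :
    l ^ n * (c * (l ^ 2 / 4) ^ ((1 : ℝ) / 2 - 1) * -(l / 2)) +
      2 ^ n * ((l ^ 2 / 4) ^ (((n : ℝ) + 1) / 2 - 1) * c * (l / 2)) = 0 := by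
  rw [sq_div_four_rpow hl.le, sq_div_four_rpow hl.le, show 2 * ((1 : ℝ) / 2 - 1) = -1 by ring,
    show 2 * (((n : ℝ) + 1) / 2 - 1) = n - 1 by ring, rpow_neg_one, rpow_sub_one (by positivity),
    rpow_natCast]
  field_simp
  rw [← mul_pow, mul_div_cancel₀ l two_ne_zero]
  ring

theorem deriv_of_pair_cdf_general
    {n : ℕ} (lam : ℝ) (hlam : lam ∈ Set.Ioo (0 : ℝ) 2) :
    HasDerivAt
      (fun l : ℝ => 1 / betaFn (((n : ℝ) + 1) / 2) (1 / 2) *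
        (l ^ n * incBeta (1 - l ^ 2 / 4) (((n : ℝ) + 1) / 2) (1 / 2) +
          2 ^ n * incBeta (l ^ 2 / 4) (((n : ℝ) + 1) / 2) (((n : ℝ) + 1) / 2)))
      ((n : ℝ) * lam ^ (n - 1) *
        regIncBeta (1 - lam ^ 2 / 4) (((n : ℝ) + 1) / 2) (1 / 2))
      lam := by
  obtain ⟨hlam0, hlam2⟩ := hlam
  have ha : 0 < ((n : ℝ) + 1) / 2 := by positivity
  have hx : lam ^ 2 / 4 ∈ Set.Ioo (0 : ℝ) 1 := ⟨by positivity, by nlinarith⟩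
  have hx' : 1 - lam ^ 2 / 4 ∈ Set.Ioo (0 : ℝ) 1 := ⟨by linarith [hx.2], by linarith [hx.1]⟩
  have hquarter : HasDerivAt (fun l : ℝ => l ^ 2 / 4) (lam / 2) lam := by
    simpa using ((hasDerivAt_pow 2 lam).div_const 4).congr_deriv (by ring)
  have hfirst := (hasDerivAt_pow n lam).mul ((hquarter.const_sub 1).incBeta ha hx' (b := 1 / 2))
  have hsecond := (hquarter.incBeta ha hx (b := ((n : ℝ) + 1) / 2)).const_mul ((2 : ℝ) ^ n)
  refine ((hfirst.add hsecond).const_mul _).congr_deriv ?_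
  rw [sub_sub_cancel, regIncBeta]
  linear_combination
    incBeta_kernel_terms_cancel n hlam0 ((1 - lam ^ 2 / 4) ^ (((n : ℝ) + 1) / 2 - 1)) /
      betaFn (((n : ℝ) + 1) / 2) (1 / 2)

theorem deriv_of_pair_cdf
    {n : ℕ} (hn : 1 ≤ n) (lam : ℝ) (hlam : lam ∈ Set.Ioo (0 : ℝ) 2) :
    HasDerivAt
      (fun l : ℝ => 1 / betaFn (((n : ℝ) + 1) / 2) (1 / 2) *
        (l ^ n * incBeta (1 - l ^ 2 / 4) (((n : ℝ) + 1) / 2) (1 / 2) +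
          2 ^ n * incBeta (l ^ 2 / 4) (((n : ℝ) + 1) / 2) (((n : ℝ) + 1) / 2)))
      ((n : ℝ) * lam ^ (n - 1) *
        regIncBeta (1 - lam ^ 2 / 4) (((n : ℝ) + 1) / 2) (1 / 2))
      lam :=
  deriv_of_pair_cdf_general lam hlam
end

section
/- Fix λ ∈ (0, 2) with λ ≠ √2. Then the pair correlation densities satisfy lim_{n→∞} P_n(λ) = lim_{n→∞} n λ^{n−1} I_{1−λ²/4}((n+1)/2, 1/2) = 0. -/
open MeasureTheory Metric Filter Topology Real

theorem pair_density_limit_zero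
    (lam : ℝ) (hlam : lam ∈ Set.Ioo (0 : ℝ) 2) (hne : lam ≠ Real.sqrt 2) :
    Tendsto
      (fun n : ℕ => (n : ℝ) * lam ^ (n - 1) *
        regIncBeta (1 - lam ^ 2 / 4) (((n : ℝ) + 1) / 2) (1 / 2))
      atTop (𝓝 0) := by
  obtain ⟨hl0, hl2⟩ := hlam
  set x : ℝ := 1 - lam ^ 2 / 4 with hxdef
  have hx0 : 0 < x := by rw [hxdef]; nlinarith
  have hx1 : x < 1 := by rw [hxdef]; nlinarith
  set s : ℝ := Real.sqrt x with hsdef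
  have hs0 : 0 < s := Real.sqrt_pos.mpr hx0
  have hs2 : s ^ 2 = x := Real.sq_sqrt hx0.le
  set q : ℝ := lam * s with hqdef
  have hq0 : 0 < q := mul_pos hl0 hs0
  have hl2ne : lam ^ 2 ≠ 2 := by
    intro h
    apply hne
    rw [← h, Real.sqrt_sq hl0.le]
  have hq2 : q ^ 2 < 1 := by
    have : q ^ 2 = lam ^ 2 * x := by rw [hqdef, mul_pow, hs2]
    rw [this, hxdef]
    rcases lt_or_gt_of_ne hl2ne with h | h <;> nlinarith [sq_nonneg (lam ^ 2 - 2)]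
  have hq1 : q < 1 := by nlinarith
  -- K is the constant in the bound on the incomplete beta function
  set K : ℝ := x * (1 - x) ^ (-(1 : ℝ) / 2) with hKdef
  have hK0 : 0 < K := mul_pos hx0 (Real.rpow_pos_of_pos (by linarith) _)
  -- the limit of the bounding sequence
  have hqn : ‖q‖ < 1 := by rwa [Real.norm_eq_abs, abs_of_pos hq0]
  have T2 : Tendsto (fun m : ℕ => (m : ℝ) ^ 2 * q ^ m) atTop (𝓝 0) :=
    (summable_pow_mul_geometric_of_norm_lt_one 2 hqn).tendsto_atTop_zero
  have T1 : Tendsto (fun m : ℕ => (m : ℝ) ^ 1 * q ^ m) atTop (𝓝 0) :=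
    (summable_pow_mul_geometric_of_norm_lt_one 1 hqn).tendsto_atTop_zero
  have T0 : Tendsto (fun m : ℕ => q ^ m) atTop (𝓝 0) :=
    tendsto_pow_atTop_nhds_zero_of_norm_lt_one hqn
  have H : Tendsto (fun m : ℕ => K / 2 * (((m : ℝ) + 1) * (((m : ℝ) + 2) * q ^ m)))
      atTop (𝓝 0) := by
    have := (((T2.add (T1.const_mul 3)).add (T0.const_mul 2)).const_mul (K / 2))
    simp only [mul_zero, add_zero, zero_add] at this
    refine this.congr fun m => ?_
    ring
  have Hg : Tendsto (fun n : ℕ => K / 2 * ((((n - 1 : ℕ) : ℝ) + 1) *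
      ((((n - 1 : ℕ) : ℝ) + 2) * q ^ (n - 1)))) atTop (𝓝 0) :=
    H.comp (tendsto_sub_atTop_nat 1)
  refine squeeze_zero' ?_ ?_ Hg
  · -- nonnegativity of the terms
    filter_upwards with n
    have ha0 : 0 < ((n : ℝ) + 1) / 2 := by positivity
    have hbeta : 0 < betaFn (((n : ℝ) + 1) / 2) (1 / 2) := by
      unfold betaFn
      have := Real.Gamma_pos_of_pos ha0
      have h2 := Real.Gamma_pos_of_pos (show (0:ℝ) < 1/2 by norm_num)
      have h3 := Real.Gamma_pos_of_pos (show (0:ℝ) < ((n : ℝ) + 1) / 2 + 1/2 by positivity)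
      positivity
    have hinc : 0 ≤ incBeta x (((n : ℝ) + 1) / 2) (1 / 2) := by
      unfold incBeta
      apply intervalIntegral.integral_nonneg hx0.le
      intro t ht
      have h1 : (0:ℝ) ≤ t := ht.1
      have h2 : (0:ℝ) ≤ 1 - t := by
        have := ht.2; linarith
      positivity
    have : 0 ≤ regIncBeta x (((n : ℝ) + 1) / 2) (1 / 2) :=
      div_nonneg hinc hbeta.le
    positivity
  · -- the main bound, for n ≥ 2
    filter_upwards [eventually_ge_atTop 2] with n hn
    set a : ℝ := ((n : ℝ) + 1) / 2 with hadef
    have hn1 : (1 : ℕ) ≤ n := by omega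
    have hnR : (2 : ℝ) ≤ (n : ℝ) := by exact_mod_cast hn
    have ha32 : (3 / 2 : ℝ) ≤ a := by rw [hadef]; linarith
    have ha0 : 0 < a := by linarith
    -- lower bound on the beta function : betaFn a (1/2) ≥ 1 / a
    have hGa : 0 < Real.Gamma a := Real.Gamma_pos_of_pos ha0
    have hbeta_lb : 1 / a ≤ betaFn a (1 / 2) := by
      have hmono : Real.Gamma (a + 1 / 2) ≤ Real.Gamma (a + 1) := by
        apply (Real.Gamma_strictMonoOn_Ici.monotoneOn) _ _ (by linarith)
        · simp only [Set.mem_Ici]; linarith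
        · simp only [Set.mem_Ici]; linarith
      have hG1 : Real.Gamma (a + 1) = a * Real.Gamma a := Real.Gamma_add_one ha0.ne'
      have hGhalf : Real.Gamma (1 / 2 : ℝ) = Real.sqrt π := Real.Gamma_one_half_eq
      have hpi : (1 : ℝ) ≤ Real.sqrt π := by
        rw [show (1:ℝ) = Real.sqrt 1 by simp]
        exact Real.sqrt_le_sqrt (by linarith [Real.pi_gt_three])
      have hGpos : 0 < Real.Gamma (a + 1 / 2) := Real.Gamma_pos_of_pos (by linarith)
      unfold betaFn
      rw [hGhalf]
      rw [div_le_div_iff₀ ha0 hGpos, one_mul]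
      calc Real.Gamma (a + 1/2) ≤ a * Real.Gamma a := by rw [← hG1]; exact hmono
        _ ≤ Real.Gamma a * Real.sqrt π * a := by nlinarith
    have hbeta0 : 0 < betaFn a (1 / 2) := lt_of_lt_of_le (by positivity) hbeta_lb
    -- upper bound on the incomplete beta function
    have hinc_ub : incBeta x a (1 / 2) ≤ K * x ^ (a - 1) := by
      have hC : ∀ t ∈ Set.uIoc (0 : ℝ) x,
          ‖t ^ (a - 1) * (1 - t) ^ ((1 : ℝ) / 2 - 1)‖ ≤
            x ^ (a - 1) * (1 - x) ^ (-(1 : ℝ) / 2) := by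
        intro t ht
        rw [Set.uIoc_of_le hx0.le] at ht
        obtain ⟨ht0, htx⟩ := ht
        have h1t : 0 < 1 - t := by linarith
        rw [Real.norm_eq_abs, abs_of_nonneg (by positivity)]
        have e1 : t ^ (a - 1) ≤ x ^ (a - 1) :=
          Real.rpow_le_rpow ht0.le htx (by linarith)
        have e2 : (1 - t) ^ ((1 : ℝ) / 2 - 1) ≤ (1 - x) ^ (-(1 : ℝ) / 2) := by
          rw [show (1 : ℝ) / 2 - 1 = -(1:ℝ)/2 by norm_num]
          exact Real.rpow_le_rpow_of_nonpos (by linarith) (by linarith) (by norm_num)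
        have := mul_le_mul e1 e2 (by positivity) (Real.rpow_nonneg hx0.le _)
        exact this
      have hnorm := intervalIntegral.norm_integral_le_of_norm_le_const hC
      rw [sub_zero, abs_of_pos hx0] at hnorm
      have : incBeta x a (1 / 2) ≤ x ^ (a - 1) * (1 - x) ^ (-(1 : ℝ) / 2) * x := by
        calc incBeta x a (1 / 2) ≤ ‖incBeta x a (1 / 2)‖ := le_norm_self _
          _ ≤ x ^ (a - 1) * (1 - x) ^ (-(1 : ℝ) / 2) * x := hnorm
      calc incBeta x a (1 / 2) ≤ x ^ (a - 1) * (1 - x) ^ (-(1 : ℝ) / 2) * x := this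
        _ = K * x ^ (a - 1) := by rw [hKdef]; ring
    -- identify x ^ (a-1) with s ^ (n-1)
    have hxa : x ^ (a - 1) = s ^ (n - 1) := by
      have hcast : ((n - 1 : ℕ) : ℝ) = (n : ℝ) - 1 := by
        rw [Nat.cast_sub hn1]; norm_num
      rw [hsdef, Real.sqrt_eq_rpow, ← Real.rpow_natCast (x ^ ((1:ℝ)/2)) (n-1),
        ← Real.rpow_mul hx0.le, hcast, hadef]
      ring_nf
    have hinc0 : 0 ≤ incBeta x a (1 / 2) := by
      unfold incBeta
      apply intervalIntegral.integral_nonneg hx0.le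
      intro t ht
      have h1 : (0:ℝ) ≤ t := ht.1
      have h2 : (0:ℝ) ≤ 1 - t := by have := ht.2; linarith
      positivity
    -- putting things together
    have hreg : regIncBeta x a (1 / 2) ≤ K * s ^ (n - 1) * a := by
      have h1 : regIncBeta x a (1 / 2) ≤ incBeta x a (1 / 2) / (1 / a) := by
        unfold regIncBeta
        exact div_le_div_of_nonneg_left hinc0 (by positivity) hbeta_lb
      rw [div_div_eq_mul_div, div_one] at h1
      calc regIncBeta x a (1 / 2) ≤ incBeta x a (1 / 2) * a := h1
        _ ≤ K * x ^ (a - 1) * a := by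
            apply mul_le_mul_of_nonneg_right hinc_ub ha0.le
        _ = K * s ^ (n - 1) * a := by rw [hxa]
    have hterm : (n : ℝ) * lam ^ (n - 1) * regIncBeta x a (1 / 2) ≤
        (n : ℝ) * lam ^ (n - 1) * (K * s ^ (n - 1) * a) := by
      apply mul_le_mul_of_nonneg_left hreg (by positivity)
    refine hterm.trans (le_of_eq ?_)
    have hcast : ((n - 1 : ℕ) : ℝ) = (n : ℝ) - 1 := by
      rw [Nat.cast_sub hn1]; norm_num
    rw [hcast]
    have hmp : lam ^ (n - 1) * s ^ (n - 1) = q ^ (n - 1) := (mul_pow lam s (n-1)).symm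
    rw [hadef]
    calc (n : ℝ) * lam ^ (n - 1) * (K * s ^ (n - 1) * (((n : ℝ) + 1) / 2))
        = K / 2 * ((n : ℝ) * (((n : ℝ) + 1) * (lam ^ (n - 1) * s ^ (n - 1)))) := by ring
      _ = K / 2 * (((n : ℝ) - 1 + 1) * (((n : ℝ) - 1 + 2) * q ^ (n - 1))) := by
          rw [hmp]; ring
end

section
/- At λ = √2, the pair correlation densities diverge: lim_{n→∞} P_n(√2) = lim_{n→∞} n (√2)^{n−1} I_{1/2}((n+1)/2, 1/2) = +∞. -/
open MeasureTheory Metric Filter Topology Real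

/-- Lower bound on the incomplete beta function: drop the `(1-t)^(-1/2)` factor. -/
lemma incBeta_lower {a : ℝ} (ha : 0 < a) :
    (1 / 2 : ℝ) ^ a / a ≤ incBeta (1 / 2) a (1 / 2) := by
  have h1 : ∫ t in (0:ℝ)..(1/2), t ^ (a - 1) = (1 / 2 : ℝ) ^ a / a := by
    rw [integral_rpow (Or.inl (by linarith))]
    rw [Real.zero_rpow (by linarith), sub_add_cancel]
    ring
  rw [incBeta, ← h1]
  have hint1 : IntervalIntegrable (fun t : ℝ => t ^ (a - 1)) volume 0 (1/2) :=
    intervalIntegral.intervalIntegrable_rpow' (by linarith)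
  have hint2 : IntervalIntegrable
      (fun t : ℝ => t ^ (a - 1) * (1 - t) ^ ((1:ℝ)/2 - 1)) volume 0 (1/2) := by
    apply hint1.mul_continuousOn
    apply ContinuousOn.rpow_const
    · exact (continuous_const.sub continuous_id).continuousOn
    · intro t ht
      left
      rw [Set.uIcc_of_le (by norm_num : (0:ℝ) ≤ 1/2)] at ht
      have := ht.2
      intro h
      linarith [sub_eq_zero.mp h]
  apply intervalIntegral.integral_mono_on (by norm_num) hint1 hint2
  intro t ht
  have ht0 : 0 ≤ t := ht.1
  have ht1 : t ≤ 1/2 := ht.2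
  have h1t : (0:ℝ) < 1 - t := by linarith
  have : (1:ℝ) ≤ (1 - t) ^ ((1:ℝ)/2 - 1) := by
    apply Real.one_le_rpow_of_pos_of_le_one_of_nonpos h1t (by linarith)
    norm_num
  nlinarith [Real.rpow_nonneg ht0 (a - 1)]

/-- Gauss-type bound via log-convexity: `Γ(a) √(a - 1/2) ≤ Γ(a + 1/2)`. -/
lemma gamma_sqrt_le {a : ℝ} (ha : 1/2 < a) :
    Real.Gamma a * Real.sqrt (a - 1/2) ≤ Real.Gamma (a + 1/2) := by
  have hx : (0:ℝ) < a - 1/2 := by linarith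
  have hy : (0:ℝ) < a + 1/2 := by linarith
  have ha0 : (0:ℝ) < a := by linarith
  have hconv := Real.convexOn_log_Gamma.2 (Set.mem_Ioi.mpr hx) (Set.mem_Ioi.mpr hy)
      (by norm_num : (0:ℝ) ≤ 1/2) (by norm_num : (0:ℝ) ≤ 1/2) (by norm_num)
  have hmid : (1/2 : ℝ) • (a - 1/2) + (1/2 : ℝ) • (a + 1/2) = a := by
    simp only [smul_eq_mul]; ring
  rw [hmid] at hconv
  simp only [Function.comp_apply, smul_eq_mul] at hconv
  -- exponentiate
  have hGx := Real.Gamma_pos_of_pos hx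
  have hGy := Real.Gamma_pos_of_pos hy
  have hGa := Real.Gamma_pos_of_pos ha0
  have hsq : Real.Gamma a ^ 2 ≤ Real.Gamma (a - 1/2) * Real.Gamma (a + 1/2) := by
    have := Real.exp_le_exp.mpr hconv
    rw [Real.exp_log hGa] at this
    rw [Real.exp_add] at this
    have hx' : Real.exp (1/2 * Real.log (Real.Gamma (a - 1/2))) =
        Real.Gamma (a - 1/2) ^ ((1:ℝ)/2) := by
      rw [Real.rpow_def_of_pos hGx]; ring_nf
    have hy' : Real.exp (1/2 * Real.log (Real.Gamma (a + 1/2))) =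
        Real.Gamma (a + 1/2) ^ ((1:ℝ)/2) := by
      rw [Real.rpow_def_of_pos hGy]; ring_nf
    rw [hx', hy'] at this
    calc Real.Gamma a ^ 2
        ≤ (Real.Gamma (a - 1/2) ^ ((1:ℝ)/2) * Real.Gamma (a + 1/2) ^ ((1:ℝ)/2)) ^ 2 := by
          apply pow_le_pow_left₀ hGa.le this
      _ = Real.Gamma (a - 1/2) * Real.Gamma (a + 1/2) := by
          rw [mul_pow, ← Real.rpow_natCast (Real.Gamma (a - 1/2) ^ ((1:ℝ)/2)) 2,
            ← Real.rpow_natCast (Real.Gamma (a + 1/2) ^ ((1:ℝ)/2)) 2,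
            ← Real.rpow_mul hGx.le, ← Real.rpow_mul hGy.le]
          norm_num
  -- Γ(a+1/2) = (a-1/2) Γ(a-1/2)
  have hrec : Real.Gamma (a + 1/2) = (a - 1/2) * Real.Gamma (a - 1/2) := by
    have : a + 1/2 = (a - 1/2) + 1 := by ring
    rw [this, Real.Gamma_add_one (ne_of_gt hx)]
  have hsq2 : (Real.Gamma a * Real.sqrt (a - 1/2)) ^ 2 ≤ Real.Gamma (a + 1/2) ^ 2 := by
    rw [mul_pow, Real.sq_sqrt hx.le]
    calc Real.Gamma a ^ 2 * (a - 1/2)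
        ≤ Real.Gamma (a - 1/2) * Real.Gamma (a + 1/2) * (a - 1/2) := by
          apply mul_le_mul_of_nonneg_right hsq hx.le
      _ = Real.Gamma (a + 1/2) ^ 2 := by rw [hrec]; ring
  have h1 : 0 ≤ Real.Gamma a * Real.sqrt (a - 1/2) :=
    mul_nonneg hGa.le (Real.sqrt_nonneg _)
  nlinarith [hsq2, h1, hGy.le]

/-- Upper bound on the beta function `B(a, 1/2)`. -/
lemma betaFn_upper {a : ℝ} (ha : 1/2 < a) :
    betaFn a (1/2) ≤ Real.sqrt π / Real.sqrt (a - 1/2) := by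
  have hx : (0:ℝ) < a - 1/2 := by linarith
  have hGy := Real.Gamma_pos_of_pos (show (0:ℝ) < a + 1/2 by linarith)
  have hGa := Real.Gamma_pos_of_pos (show (0:ℝ) < a by linarith)
  rw [betaFn, Real.Gamma_one_half_eq]
  rw [div_le_div_iff₀ hGy (Real.sqrt_pos.mpr hx)]
  have := gamma_sqrt_le ha
  calc Real.Gamma a * Real.sqrt π * Real.sqrt (a - 1/2)
      = (Real.Gamma a * Real.sqrt (a - 1/2)) * Real.sqrt π := by ring
    _ ≤ Real.Gamma (a + 1/2) * Real.sqrt π := by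
        apply mul_le_mul_of_nonneg_right this (Real.sqrt_nonneg _)
    _ = Real.sqrt π * Real.Gamma (a + 1/2) := by ring

lemma betaFn_pos {a : ℝ} (ha : 0 < a) : 0 < betaFn a (1/2) := by
  rw [betaFn]
  apply div_pos
  · exact mul_pos (Real.Gamma_pos_of_pos ha) (Real.Gamma_pos_of_pos (by norm_num))
  · exact Real.Gamma_pos_of_pos (by linarith)

/-- Key lower bound for `P_n(√2)`. -/
lemma key_bound (n : ℕ) (hn : 1 ≤ n) :
    Real.sqrt n / (2 * Real.sqrt 2 * Real.sqrt π) ≤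
      (n : ℝ) * Real.sqrt 2 ^ (n - 1) *
        regIncBeta (1 / 2) (((n : ℝ) + 1) / 2) (1 / 2) := by
  set a : ℝ := ((n : ℝ) + 1) / 2 with ha_def
  clear_value a
  have hn1 : (1:ℝ) ≤ (n : ℝ) := by exact_mod_cast hn
  have ha1 : (1:ℝ) ≤ a := by rw [ha_def]; linarith
  have ha0 : (0:ℝ) < a := by linarith
  have ha2 : (1/2:ℝ) < a := by linarith
  have hx : a - 1/2 = (n : ℝ) / 2 := by rw [ha_def]; ring
  have hB := betaFn_upper ha2
  have hBpos := betaFn_pos ha0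
  have hI := incBeta_lower ha0
  have hIpos : (0:ℝ) < (1 / 2 : ℝ) ^ a / a :=
    div_pos (Real.rpow_pos_of_pos (by norm_num) a) ha0
  -- regIncBeta lower bound
  have hreg : ((1 / 2 : ℝ) ^ a / a) * (Real.sqrt (a - 1/2) / Real.sqrt π) ≤
      regIncBeta (1/2) a (1/2) := by
    rw [regIncBeta]
    have hπ : (0:ℝ) < Real.sqrt π := Real.sqrt_pos.mpr Real.pi_pos
    have hsx : (0:ℝ) < Real.sqrt (a - 1/2) := Real.sqrt_pos.mpr (by linarith)
    calc ((1 / 2 : ℝ) ^ a / a) * (Real.sqrt (a - 1/2) / Real.sqrt π)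
        = ((1 / 2 : ℝ) ^ a / a) / (Real.sqrt π / Real.sqrt (a - 1/2)) := by
          rw [div_div_eq_mul_div ((1 / 2 : ℝ) ^ a / a) (Real.sqrt π),
            mul_div_assoc]
      _ ≤ ((1 / 2 : ℝ) ^ a / a) / betaFn a (1/2) := by
          apply div_le_div_of_nonneg_left hIpos.le hBpos hB
      _ ≤ incBeta (1/2) a (1/2) / betaFn a (1/2) := by
          exact div_le_div_of_nonneg_right hI hBpos.le
  -- combine
  have hs2 : (0:ℝ) < Real.sqrt 2 := Real.sqrt_pos.mpr (by norm_num)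
  have hpow : Real.sqrt 2 ^ (n - 1) * (1 / 2 : ℝ) ^ a = 1 / 2 := by
    have h2 : (0:ℝ) < 2 := by norm_num
    have hhalf : (1 / 2 : ℝ) ^ a = (2:ℝ) ^ (-a) := by
      rw [one_div, Real.inv_rpow h2.le, Real.rpow_neg h2.le]
    rw [Real.sqrt_eq_rpow, ← Real.rpow_natCast ((2:ℝ) ^ ((1:ℝ)/2)) (n-1),
      ← Real.rpow_mul h2.le, hhalf, ← Real.rpow_add h2]
    have hcast : ((n - 1 : ℕ) : ℝ) = (n : ℝ) - 1 := by
      rw [Nat.cast_sub hn]; norm_num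
    rw [hcast]
    have hexp : (1:ℝ)/2 * ((n:ℝ) - 1) + -a = -1 := by rw [ha_def]; ring
    rw [hexp, Real.rpow_neg_one]
    norm_num
  have hnpos : (0:ℝ) < (n:ℝ) := by linarith
  calc Real.sqrt n / (2 * Real.sqrt 2 * Real.sqrt π)
      ≤ (n : ℝ) * Real.sqrt 2 ^ (n - 1) *
          (((1 / 2 : ℝ) ^ a / a) * (Real.sqrt (a - 1/2) / Real.sqrt π)) := by
        have hπ : (0:ℝ) < Real.sqrt π := Real.sqrt_pos.mpr Real.pi_pos
        have h1 : (n : ℝ) * Real.sqrt 2 ^ (n - 1) *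
            (((1 / 2 : ℝ) ^ a / a) * (Real.sqrt (a - 1/2) / Real.sqrt π))
            = ((n:ℝ) / (2 * a)) * (Real.sqrt (a - 1/2) / Real.sqrt π) := by
          have : (n : ℝ) * Real.sqrt 2 ^ (n - 1) *
              (((1 / 2 : ℝ) ^ a / a) * (Real.sqrt (a - 1/2) / Real.sqrt π))
              = (n:ℝ) * (Real.sqrt 2 ^ (n - 1) * (1 / 2 : ℝ) ^ a) / a *
                (Real.sqrt (a - 1/2) / Real.sqrt π) := by ring
          rw [this, hpow]; ring
        rw [h1, hx]
        -- √(n/2) = √n / √2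
        have hsx2 : Real.sqrt ((n:ℝ)/2) = Real.sqrt n / Real.sqrt 2 := by
          rw [Real.sqrt_div hnpos.le]
        rw [hsx2]
        -- goal: √n / (2√2√π) ≤ (n/(2a)) * (√n/√2/√π)
        have hfrac : (1/2 : ℝ) ≤ (n:ℝ) / (2 * a) := by
          rw [ha_def, div_le_div_iff₀ (by norm_num) (by linarith)]
          linarith
        have hpos2 : (0:ℝ) ≤ Real.sqrt n / Real.sqrt 2 / Real.sqrt π :=
          div_nonneg (div_nonneg (Real.sqrt_nonneg _) hs2.le) hπ.le
        calc Real.sqrt n / (2 * Real.sqrt 2 * Real.sqrt π)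
            = (1/2 : ℝ) * (Real.sqrt n / Real.sqrt 2 / Real.sqrt π) := by
              ring
          _ ≤ ((n:ℝ) / (2 * a)) * (Real.sqrt n / Real.sqrt 2 / Real.sqrt π) :=
              mul_le_mul_of_nonneg_right hfrac hpos2
    _ ≤ (n : ℝ) * Real.sqrt 2 ^ (n - 1) *
          regIncBeta (1/2) a (1/2) := by
        apply mul_le_mul_of_nonneg_left hreg
        positivity

theorem pair_density_limit_at_sqrt_two :
    Tendsto
      (fun n : ℕ => (n : ℝ) * Real.sqrt 2 ^ (n - 1) *
        regIncBeta (1 / 2) (((n : ℝ) + 1) / 2) (1 / 2))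
      atTop atTop := by
  have hC : (0:ℝ) < 2 * Real.sqrt 2 * Real.sqrt π := by
    have := Real.sqrt_pos.mpr Real.pi_pos
    have h2 := Real.sqrt_pos.mpr (show (0:ℝ) < 2 by norm_num)
    positivity
  have hbound : Tendsto (fun n : ℕ => Real.sqrt n / (2 * Real.sqrt 2 * Real.sqrt π))
      atTop atTop := by
    apply Tendsto.atTop_div_const hC
    have h1 : Tendsto (fun x : ℝ => x ^ ((1:ℝ)/2)) atTop atTop :=
      tendsto_rpow_atTop (by norm_num)
    have h2 : Tendsto (fun n : ℕ => ((n:ℝ) ^ ((1:ℝ)/2))) atTop atTop :=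
      h1.comp tendsto_natCast_atTop_atTop
    apply h2.congr
    intro n
    rw [Real.sqrt_eq_rpow]
  apply tendsto_atTop_mono' atTop _ hbound
  filter_upwards [eventually_ge_atTop 1] with n hn
  exact key_bound n hn
end

section
/- Let n ≥ 1 and let Ω ⊆ ℝⁿ be a compact set whose topological boundary has Lebesgue measure zero. Then the number of integer lattice points in the dilation rΩ satisfies lim_{r→∞} #(ℤⁿ ∩ rΩ) / rⁿ = m(Ω), where m is Lebesgue measure on ℝⁿ. -/
/-!
The half-open unit cubes `∏ᵢ [xᵢ, xᵢ + 1)` with corners `x ∈ ℤⁿ` are disjoint, have volume `1` and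
diameter `√n`. For a bounded set `A`, the cubes at the lattice points of `A` lie in the closed
`√n`-neighbourhood of `A`, while every point of `A` at distance more than `√n` from `∂A` lies in
such a cube (the ball of radius `√n` around it is connected and misses `∂A`, so stays in `A`).
Applied to `A = r • Ω` and rescaled, this squeezes `#(ℤⁿ ∩ rΩ) / rⁿ` between
`m(Ω) - m(∂Ω + closedBall 0 (√n / r))` and `m(Ω + closedBall 0 (√n / r))`. As `r → ∞` both bounds
tend to `m(Ω)`, because the closed `δ`-neighbourhoods of the compact sets `Ω` and `∂Ω` decrease to
them and `m(∂Ω) = 0`.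
-/

open MeasureTheory Metric Filter Topology Pointwise

/-- The integer lattice points in `ℝⁿ`. -/
def latticePts (n : ℕ) : Set (EuclideanSpace ℝ (Fin n)) :=
  {x | ∀ i, ∃ k : ℤ, x i = (k : ℝ)}

open Set Bornology

theorem IsPreconnected.subset_of_disjoint_frontier {X : Type*} [TopologicalSpace X]
    {s t : Set X} (ht : IsPreconnected t) (hdisj : Disjoint t (frontier s))
    (hts : (t ∩ s).Nonempty) : t ⊆ s := by
  have hint : ∀ x ∈ t, x ∈ closure s → x ∈ interior s := fun x hxt hxs =>
    by_contra fun hxi => disjoint_left.mp hdisj hxt ⟨hxs, hxi⟩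
  obtain ⟨x, hxt, hxs⟩ := hts
  refine (ht.subset_of_closure_inter_subset isOpen_interior
    ⟨x, hxt, hint x hxt (subset_closure hxs)⟩ ?_).trans interior_subset
  rintro y ⟨hy, hyt⟩
  exact hint y hyt (closure_mono interior_subset hy)

section NormedSpace

variable {E : Type*} [NormedAddCommGroup E] [NormedSpace ℝ E]

theorem closedBall_subset_of_notMem_cthickening_frontier {s : Set E} {x : E} {δ : ℝ}
    (hx : x ∈ s) (hδ : 0 ≤ δ) (hxδ : x ∉ cthickening δ (frontier s)) : closedBall x δ ⊆ s :=
  (convex_closedBall x δ).isPreconnected.subset_of_disjoint_frontier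
    (disjoint_left.mpr fun _ hy hyf =>
      hxδ (mem_cthickening_of_dist_le x _ δ _ hyf (by rwa [dist_comm, ← mem_closedBall])))
    ⟨x, mem_closedBall_self hδ, hx⟩

theorem cthickening_smul_of_pos {c : ℝ} (hc : 0 < c) (δ : ℝ) (s : Set E) :
    cthickening (c * δ) (c • s) = c • cthickening δ s := by
  ext x
  rw [mem_smul_set_iff_inv_smul_mem₀ hc.ne', mem_cthickening_iff, mem_cthickening_iff,
    ← smul_inv_smul₀ hc.ne' x, infEDist_smul₀ hc.ne', inv_smul_smul₀ hc.ne', ENNReal.smul_def,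
    smul_eq_mul, ENNReal.ofReal_mul hc.le, ← Real.enorm_eq_ofReal hc.le, enorm_eq_nnnorm,
    ENNReal.mul_le_mul_iff_right (by simp [hc.ne']) ENNReal.coe_ne_top]

theorem frontier_smul_of_ne_zero {c : ℝ} (hc : c ≠ 0) (s : Set E) :
    frontier (c • s) = c • frontier s := by
  simp only [← image_smul]
  exact ((Homeomorph.smulOfNeZero c hc).image_frontier s).symm

end NormedSpace

theorem MeasureTheory.Measure.addHaar_real_smul_of_nonneg {E : Type*} [NormedAddCommGroup E]
    [NormedSpace ℝ E] [MeasurableSpace E] [BorelSpace E] [FiniteDimensional ℝ E]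
    (μ : Measure E) [μ.IsAddHaarMeasure] {r : ℝ} (hr : 0 ≤ r) (s : Set E) :
    μ.real (r • s) = r ^ Module.finrank ℝ E * μ.real s := by
  rw [measureReal_def, μ.addHaar_smul_of_nonneg hr, ENNReal.toReal_mul,
    ENNReal.toReal_ofReal (by positivity), measureReal_def]

theorem tendsto_measureReal_cthickening_of_isCompact {α : Type*} [MetricSpace α]
    [MeasurableSpace α] [OpensMeasurableSpace α] [ProperSpace α] {μ : Measure α}
    [IsFiniteMeasureOnCompacts μ] {s : Set α} (hs : IsCompact s) :
    Tendsto (fun δ => μ.real (cthickening δ s)) (𝓝 0) (𝓝 (μ.real s)) :=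
  (ENNReal.tendsto_toReal hs.measure_lt_top.ne).comp
    (tendsto_measure_cthickening_of_isCompact hs)

section UnitCube

variable {ι : Type*}

def unitCube (x : EuclideanSpace ℝ ι) : Set (EuclideanSpace ℝ ι) :=
  {y | ∀ i, y i ∈ Ico (x i) (x i + 1)}

theorem unitCube_eq_preimage (x : EuclideanSpace ℝ ι) :
    unitCube x =
      (MeasurableEquiv.toLp 2 (ι → ℝ)).symm ⁻¹' univ.pi fun i => Ico (x i) (x i + 1) := by
  ext y
  simp [unitCube, MeasurableEquiv.coe_toLp_symm]

variable [Fintype ι]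

theorem measurableSet_unitCube (x : EuclideanSpace ℝ ι) : MeasurableSet (unitCube x) := by
  rw [unitCube_eq_preimage]
  exact (MeasurableEquiv.toLp 2 _).symm.measurable (.univ_pi fun _ => measurableSet_Ico)

theorem volume_unitCube (x : EuclideanSpace ℝ ι) : volume (unitCube x) = 1 := by
  rw [unitCube_eq_preimage,
    (EuclideanSpace.volume_preserving_symm_measurableEquiv_toLp ι).measure_preimage
      (MeasurableSet.univ_pi fun _ => measurableSet_Ico).nullMeasurableSet, volume_pi_pi]
  simp

theorem dist_le_sqrt_card_of_mem_unitCube {x y : EuclideanSpace ℝ ι} (hy : y ∈ unitCube x) :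
    dist y x ≤ √(Fintype.card ι) := by
  rw [EuclideanSpace.dist_eq]
  gcongr
  calc ∑ i, dist (y i) (x i) ^ 2 ≤ ∑ _i : ι, (1 : ℝ) := by
        gcongr with i
        obtain ⟨h₁, h₂⟩ := hy i
        rw [Real.dist_eq, abs_of_nonneg (by linarith)]
        exact pow_le_one₀ (by linarith) (by linarith)
    _ = Fintype.card ι := by simp

theorem biUnion_unitCube_subset_cthickening {A : Set (EuclideanSpace ℝ ι)}
    {F : Finset (EuclideanSpace ℝ ι)} (hF : ↑F ⊆ A) :
    ⋃ x ∈ F, unitCube x ⊆ cthickening √(Fintype.card ι) A := by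
  simp only [iUnion_subset_iff]
  exact fun x hx y hy => mem_cthickening_of_dist_le y x _ A (hF hx)
    (dist_le_sqrt_card_of_mem_unitCube hy)

end UnitCube

section Lattice

variable {n : ℕ}

noncomputable def latticeFloor (y : EuclideanSpace ℝ (Fin n)) : EuclideanSpace ℝ (Fin n) :=
  WithLp.toLp 2 fun i => (⌊y i⌋ : ℝ)

theorem latticeFloor_mem_latticePts (y : EuclideanSpace ℝ (Fin n)) :
    latticeFloor y ∈ latticePts n :=
  fun i => ⟨⌊y i⌋, rfl⟩

theorem mem_unitCube_latticeFloor (y : EuclideanSpace ℝ (Fin n)) :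
    y ∈ unitCube (latticeFloor y) :=
  fun _ => ⟨Int.floor_le _, Int.lt_floor_add_one _⟩

theorem dist_latticeFloor_le (y : EuclideanSpace ℝ (Fin n)) : dist y (latticeFloor y) ≤ √n := by
  simpa using dist_le_sqrt_card_of_mem_unitCube (mem_unitCube_latticeFloor y)

theorem latticeFloor_eq_of_mem_unitCube {x y : EuclideanSpace ℝ (Fin n)} (hx : x ∈ latticePts n)
    (hy : y ∈ unitCube x) : latticeFloor y = x := by
  ext i
  obtain ⟨k, hk⟩ := hx i
  have : ⌊y i⌋ = k := Int.floor_eq_iff.mpr (hk ▸ hy i)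
  simp [latticeFloor, this, hk]

theorem pairwiseDisjoint_unitCube : (latticePts n).PairwiseDisjoint unitCube :=
  fun _ hx _ hx' hne => disjoint_left.mpr fun _ hy hy' =>
    hne ((latticeFloor_eq_of_mem_unitCube hx hy).symm.trans
      (latticeFloor_eq_of_mem_unitCube hx' hy'))

theorem measureReal_biUnion_unitCube {F : Finset (EuclideanSpace ℝ (Fin n))}
    (hF : ↑F ⊆ latticePts n) : volume.real (⋃ x ∈ F, unitCube x) = F.card := by
  rw [measureReal_biUnion_finset (pairwiseDisjoint_unitCube.subset hF)
    (fun x _ => measurableSet_unitCube x) (fun x _ => by simp [volume_unitCube])]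
  simp [measureReal_def, volume_unitCube]

end Lattice

section Counting

variable {n : ℕ} {A : Set (EuclideanSpace ℝ (Fin n))}

theorem card_le_measureReal_cthickening (hA : IsBounded A)
    {F : Finset (EuclideanSpace ℝ (Fin n))} (hF : ↑F ⊆ latticePts n ∩ A) :
    (F.card : ℝ) ≤ volume.real (cthickening √n A) := by
  rw [← measureReal_biUnion_unitCube (hF.trans inter_subset_left)]
  refine measureReal_mono ?_ hA.cthickening.measure_lt_top.ne
  simpa using biUnion_unitCube_subset_cthickening (hF.trans inter_subset_right)

-- The disjoint unit cubes at the lattice points of `A` all lie in a set of finite volume.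
theorem finite_latticePts_inter (hA : IsBounded A) : (latticePts n ∩ A).Finite := by
  by_contra hinf
  obtain ⟨F, hFA, hF⟩ := Set.Infinite.exists_subset_card_eq hinf
    (⌊volume.real (cthickening √n A)⌋₊ + 1)
  have := card_le_measureReal_cthickening hA hFA
  rw [hF, Nat.cast_add_one] at this
  linarith [Nat.lt_floor_add_one (volume.real (cthickening √n A))]

theorem cnt_latticePts_inter_le (hA : IsBounded A) :
    cnt (latticePts n ∩ A) ≤ volume.real (cthickening √n A) := by
  rw [cnt, Nat.card_eq_card_finite_toFinset (finite_latticePts_inter hA)]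
  exact card_le_measureReal_cthickening hA (by simp)

theorem measureReal_le_cnt_latticePts_inter_add (hA : IsBounded A) :
    volume.real A ≤ cnt (latticePts n ∩ A) + volume.real (cthickening √n (frontier A)) := by
  have hfin := finite_latticePts_inter hA
  set F := hfin.toFinset
  have hcover : A ⊆ (⋃ x ∈ F, unitCube x) ∪ cthickening √n (frontier A) := by
    intro y hy
    by_cases hyδ : y ∈ cthickening √n (frontier A)
    · exact Or.inr hyδ
    · have hball := closedBall_subset_of_notMem_cthickening_frontier hy (Real.sqrt_nonneg _) hyδ
      refine Or.inl (mem_biUnion ?_ (mem_unitCube_latticeFloor y))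
      simpa [F] using ⟨latticeFloor_mem_latticePts y,
        hball (by rw [mem_closedBall, dist_comm]; exact dist_latticeFloor_le y)⟩
  have hbdd : IsBounded ((⋃ x ∈ F, unitCube x) ∪ cthickening √n (frontier A)) :=
    (hA.cthickening.subset
      (by simpa using biUnion_unitCube_subset_cthickening (by simp [F]))).union
        (hA.closure.subset frontier_subset_closure).cthickening
  calc volume.real A ≤ volume.real ((⋃ x ∈ F, unitCube x) ∪ cthickening √n (frontier A)) :=
        measureReal_mono hcover hbdd.measure_lt_top.ne
    _ ≤ volume.real (⋃ x ∈ F, unitCube x) + volume.real (cthickening √n (frontier A)) :=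
        measureReal_union_le _ _
    _ = cnt (latticePts n ∩ A) + volume.real (cthickening √n (frontier A)) := by
        rw [measureReal_biUnion_unitCube (by simp [F]), cnt,
          Nat.card_eq_card_finite_toFinset hfin]

theorem cnt_latticePts_smul_div_pow_le (hA : IsBounded A) {r : ℝ} (hr : 0 < r) :
    cnt (latticePts n ∩ r • A) / r ^ n ≤ volume.real (cthickening (√n / r) A) := by
  have h := cnt_latticePts_inter_le (hA.smul₀ r)
  rw [← mul_div_cancel₀ √n hr.ne', cthickening_smul_of_pos hr,
    volume.addHaar_real_smul_of_nonneg hr.le, finrank_euclideanSpace_fin] at h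
  rwa [div_le_iff₀' (pow_pos hr n)]

theorem measureReal_sub_le_cnt_latticePts_smul_div_pow (hA : IsBounded A) {r : ℝ}
    (hr : 0 < r) :
    volume.real A - volume.real (cthickening (√n / r) (frontier A)) ≤
      cnt (latticePts n ∩ r • A) / r ^ n := by
  have h := measureReal_le_cnt_latticePts_inter_add (hA.smul₀ r)
  rw [frontier_smul_of_ne_zero hr.ne', ← mul_div_cancel₀ √n hr.ne', cthickening_smul_of_pos hr,
    volume.addHaar_real_smul_of_nonneg hr.le, volume.addHaar_real_smul_of_nonneg hr.le,
    finrank_euclideanSpace_fin] at h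
  rw [le_div_iff₀ (pow_pos hr n)]
  linarith

end Counting

theorem lattice_point_count_general
    {n : ℕ} (Ω : Set (EuclideanSpace ℝ (Fin n)))
    (hΩc : IsCompact Ω) (hbd : volume (frontier Ω) = 0) :
    Tendsto (fun r : ℝ => cnt (latticePts n ∩ r • Ω) / r ^ n) atTop
      (𝓝 (volume Ω).toReal) := by
  have hδ : Tendsto (fun r : ℝ => √n / r) atTop (𝓝 0) := tendsto_const_nhds.div_atTop tendsto_id
  have hupper := (tendsto_measureReal_cthickening_of_isCompact (μ := volume) hΩc).comp hδ
  have hfrontier := (tendsto_measureReal_cthickening_of_isCompact (μ := volume)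
    (hΩc.of_isClosed_subset isClosed_frontier hΩc.isClosed.frontier_subset)).comp hδ
  rw [measureReal_def, hbd, ENNReal.toReal_zero] at hfrontier
  have hlower := (tendsto_const_nhds (x := volume.real Ω)).sub hfrontier
  rw [sub_zero] at hlower
  refine tendsto_of_tendsto_of_tendsto_of_le_of_le' hlower hupper ?_ ?_ <;>
    filter_upwards [eventually_gt_atTop 0] with r hr
  · exact measureReal_sub_le_cnt_latticePts_smul_div_pow hΩc.isBounded hr
  · exact cnt_latticePts_smul_div_pow_le hΩc.isBounded hr

theorem lattice_point_count
    {n : ℕ} (hn : 1 ≤ n) (Ω : Set (EuclideanSpace ℝ (Fin n)))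
    (hΩc : IsCompact Ω) (hbd : volume (frontier Ω) = 0) :
    Tendsto (fun r : ℝ => cnt (latticePts n ∩ r • Ω) / r ^ n) atTop
      (𝓝 (volume Ω).toReal) :=
  lattice_point_count_general Ω hΩc hbd
end
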